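/- arXiv:2309.16892 — 7 statements merged into one kernel-verified Lean document; each statement's English description precedes it below -/
import Mathlib

section
/- Let G be a complete (finite simple) graph and let 𝒳 = {(s_1,t_1),…,(s_k,t_k)} be a multiset of k pairs of distinct vertices of G. If |V(G)| > k, then (G,𝒳,k) is a Yes-instance of EDP; that is, there exist k pairwise edge-disjoint paths P_1,…,P_k in G such that P_i has endpoints s_i and t_i for every i ∈ {1,…,k}. -/
open SimpleGraph Finset

/-- A family of walks in `G` connecting the terminal pairs `X`. -/
abbrev WalkFamily {V : Type*} (G : SimpleGraph V) {ι : Type*} (X : ι → V × V) :=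
  ∀ i : ι, G.Walk (X i).1 (X i).2

/-- The walks in the family are pairwise edge-disjoint. -/
def PairwiseEdgeDisjoint {V : Type*} (G : SimpleGraph V) {ι : Type*} (X : ι → V × V)
    (P : WalkFamily G X) : Prop :=
  ∀ i j : ι, i ≠ j → ∀ e : Sym2 V, e ∈ (P i).edges → e ∉ (P j).edges

/-- A solution of the Edge-Disjoint Paths (EDP) instance `(G, X)`: a family of paths
connecting the terminal pairs that are pairwise edge-disjoint. -/
def IsEDPSolution {V : Type*} (G : SimpleGraph V) {ι : Type*} (X : ι → V × V)
    (P : WalkFamily G X) : Prop :=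
  (∀ i, (P i).IsPath) ∧ PairwiseEdgeDisjoint G X P

/-- `(G, X)` is a Yes-instance of EDP. -/
def EDPYes {V : Type*} (G : SimpleGraph V) {ι : Type*} (X : ι → V × V) : Prop :=
  ∃ P : WalkFamily G X, IsEDPSolution G X P

/-! With more vertices than terminal pairs, double counting gives a vertex `w` that is an
endpoint of at most one pair. Route that pair (or any pair, if `w` is an endpoint of none)
along edges at `w`: directly if `w` is one of its endpoints, via `w` otherwise. The remaining
pairs live in the complete graph on the other vertices, which still has more vertices than
pairs, so induction routes them with edges avoiding `w`. -/

theorem exists_vertex_avoided_except_one_of_card_lt {V ι : Type*} [Fintype V] [Fintype ι]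
    [Nonempty ι] (X : ι → V × V) (hcard : Fintype.card ι < Fintype.card V) :
    ∃ w : V, ∃ i₀ : ι, ∀ j, j ≠ i₀ → (X j).1 ≠ w ∧ (X j).2 ≠ w := by
  classical
  let endpoint : ι ⊕ ι → V := Sum.elim (fun i => (X i).1) (fun i => (X i).2)
  obtain ⟨w, hfiber⟩ := Fintype.exists_card_fiber_lt_of_card_lt_mul (f := endpoint) (n := 2)
    (by rw [Fintype.card_sum]; omega)
  have hw : ∀ a b, endpoint a = w → endpoint b = w → a = b := fun a b ha hb =>
    Finset.card_le_one.mp (Nat.le_of_lt_succ hfiber) a (by simpa using ha) b (by simpa using hb)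
  by_cases hend : ∃ a, endpoint a = w
  · obtain ⟨a, ha⟩ := hend
    refine ⟨w, Sum.elim id id a, fun j hj => ⟨fun h => hj ?_, fun h => hj ?_⟩⟩
    · exact congrArg (Sum.elim id id) (hw (.inl j) a h ha)
    · exact congrArg (Sum.elim id id) (hw (.inr j) a h ha)
  · push Not at hend
    exact ⟨w, Classical.arbitrary ι, fun j _ => ⟨hend (.inl j), hend (.inr j)⟩⟩

namespace SimpleGraph

theorem exists_isPath_top_forall_mem_edges (V : Type*) {s t : V} (hst : s ≠ t) (w : V) :
    ∃ Q : (⊤ : SimpleGraph V).Walk s t, Q.IsPath ∧ ∀ e ∈ Q.edges, w ∈ e := by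
  by_cases hw : s = w ∨ t = w
  · refine ⟨Walk.cons (by simpa using hst) .nil, by simpa using hst, ?_⟩
    rcases hw with rfl | rfl <;> simp
  · push Not at hw
    refine ⟨Walk.cons (by simpa using hw.1) (Walk.cons (by simpa using hw.2.symm) .nil), ?_, ?_⟩
    · simp [Walk.isPath_def, hst, hw.1, hw.2.symm]
    · simp

end SimpleGraph

section

variable {V V' : Type*} {G : SimpleGraph V} {ι : Type*}

theorem IsEDPSolution.map {G' : SimpleGraph V'} {X : ι → V' × V'} {P : WalkFamily G' X}
    (hP : IsEDPSolution G' X P) (f : G' ↪g G) :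
    IsEDPSolution G (fun i => (f (X i).1, f (X i).2)) (fun i => (P i).map f.toHom) := by
  refine ⟨fun i => (hP.1 i).map f.injective, ?_⟩
  intro i j hij e hei hej
  rw [Walk.edges_map, List.mem_map] at hei hej
  obtain ⟨a, ha, rfl⟩ := hei
  obtain ⟨b, hb, hba⟩ := hej
  rw [Sym2.map.injective f.injective hba] at hb
  exact hP.2 i j hij a ha hb

theorem IsEDPSolution.insertNth {k : ℕ} {X : Fin (k + 1) → V × V} (i₀ : Fin (k + 1))
    {Q : G.Walk (X i₀).1 (X i₀).2} {P : WalkFamily G (X ∘ i₀.succAbove)} (hQ : Q.IsPath)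
    (hP : IsEDPSolution G (X ∘ i₀.succAbove) P)
    (hQP : ∀ j, ∀ e ∈ Q.edges, e ∉ (P j).edges) :
    IsEDPSolution G X (Fin.insertNth (α := fun i => G.Walk (X i).1 (X i).2) i₀ Q P) := by
  refine ⟨(Fin.forall_iff_succAbove i₀).2 ⟨by simpa using hQ, by simpa using hP.1⟩, ?_⟩
  intro i i' hii' e he he'
  rcases i₀.eq_self_or_eq_succAbove i with hi | ⟨j, hi⟩ <;>
    rcases i₀.eq_self_or_eq_succAbove i' with hi' | ⟨j', hi'⟩ <;> subst i i'
  all_goals simp only [Fin.insertNth_apply_same, Fin.insertNth_apply_succAbove] at he he'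
  · exact hii' rfl
  · exact hQP j' e he he'
  · exact hQP j e he' he
  · exact hP.2 j j' (fun h => hii' (h ▸ rfl)) e he he'

theorem edpYes_top_of_card_lt (k : ℕ) :
    ∀ {V : Type*} [Fintype V] (X : Fin k → V × V), (∀ i, (X i).1 ≠ (X i).2) →
      k < Fintype.card V → EDPYes (⊤ : SimpleGraph V) X := by
  induction k with
  | zero => exact fun _ _ _ => ⟨finZeroElim, finZeroElim, finZeroElim⟩
  | succ k ih =>
    intro V _ X hX hcard
    classical
    obtain ⟨w, i₀, hw⟩ := exists_vertex_avoided_except_one_of_card_lt X (by simpa using hcard)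
    obtain ⟨Q, hQ, hQw⟩ := exists_isPath_top_forall_mem_edges V (hX i₀) w
    let X' : Fin k → {v : V // v ≠ w} × {v : V // v ≠ w} := fun j =>
      (⟨_, (hw _ (i₀.succAbove_ne j)).1⟩, ⟨_, (hw _ (i₀.succAbove_ne j)).2⟩)
    have hcard' : k < Fintype.card {v : V // v ≠ w} := by
      rw [Fintype.card_subtype_compl, Fintype.card_subtype_eq]
      omega
    obtain ⟨P', hP'⟩ := ih X' (fun j h => hX _ (congrArg Subtype.val h)) hcard'
    let f := Embedding.completeGraph (Function.Embedding.subtype (· ≠ w))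
    refine ⟨_, hP'.map f |>.insertNth i₀ hQ fun j e he he' => ?_⟩
    have hw' := Walk.mem_support_of_mem_edges (p := (P' j).map f.toHom) he' (hQw e he)
    rw [Walk.support_map, List.mem_map] at hw'
    obtain ⟨v, -, hv⟩ := hw'
    exact v.2 hv

end

/-- If `G` is a complete graph on more than `k` vertices, then every EDP
instance on `G` with `k` terminal pairs (of distinct vertices) is a Yes-instance. -/
theorem edp_complete_graph_yes {V : Type*} [Fintype V] (G : SimpleGraph V)
    (hcomplete : ∀ x y : V, x ≠ y → G.Adj x y)
    {k : ℕ} (X : Fin k → V × V) (hX : ∀ i, (X i).1 ≠ (X i).2)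
    (hcard : k < Fintype.card V) :
    EDPYes G X := by
  obtain rfl : G = ⊤ := eq_top_iff.2 fun x y hxy => hcomplete x y hxy.ne
  exact edpYes_top_of_card_lt k X hX hcard
end

section
/- Let G be a split graph with split partition (C, I) and let 𝒳 be a multiset of k pairs of distinct vertices of G. If |C| > k and every terminal vertex v has degree at least the number of occurrences of terminal pairs of 𝒳 containing v, then (G,𝒳,k) is a Yes-instance of EDP. -/
open SimpleGraph Finset

/-- `(C, I)` is a split partition of `G`: `V(G)` is the disjoint union of `C` and `I`,
`C` induces a clique, and `I` is an independent set. -/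
def IsSplitPartition {V : Type*} (G : SimpleGraph V) (C I : Finset V) : Prop :=
  (∀ x : V, x ∈ C ∨ x ∈ I) ∧ (∀ x : V, ¬ (x ∈ C ∧ x ∈ I)) ∧
  (∀ x ∈ C, ∀ y ∈ C, x ≠ y → G.Adj x y) ∧ (∀ x ∈ I, ∀ y ∈ I, ¬ G.Adj x y)

/-
Terminals outside the clique `C` lie in the independent set, so all their neighbours are in `C`.
The degree condition lets each occurrence of such a terminal in a pair reserve a neighbour of its
own (a port), and then distinct pairs never share a pendant edge; it remains to link the ports
inside the clique by edge-disjoint paths. In a clique with more than `k` vertices, counting shows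
that some vertex `z` is an endpoint of at most one pair: route that pair through `z` (every edge
then contains `z`) and the remaining pairs recursively inside `C \ {z}`.
-/

theorem exists_mem_forall_ne_of_card_lt {V ι : Type*} [Fintype ι] [Nonempty ι] {C : Finset V}
    (Y : ι → V × V) (hcard : Fintype.card ι < C.card) :
    ∃ z ∈ C, ∃ i₀, ∀ j ≠ i₀, (Y j).1 ≠ z ∧ (Y j).2 ≠ z := by
  classical
  let f : ι ⊕ ι → V := Sum.elim (fun i => (Y i).1) (fun i => (Y i).2)
  obtain ⟨z, hzC, hz⟩ := exists_card_fiber_lt_of_card_lt_mul (s := univ) (t := C) (f := f) (n := 2)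
    (by simp; omega)
  have hfib : ∀ x y : ι ⊕ ι, f x = z → f y = z → x = y := fun x y hx hy =>
    card_le_one.mp (Nat.lt_succ_iff.mp hz) x (by simpa using hx) y (by simpa using hy)
  by_cases hocc : ∃ i, (Y i).1 = z ∨ (Y i).2 = z
  · obtain ⟨i₀, hi₀⟩ := hocc
    obtain ⟨x₀, hx₀z, hx₀⟩ : ∃ x₀, f x₀ = z ∧ (x₀ = .inl i₀ ∨ x₀ = .inr i₀) :=
      hi₀.elim (fun h => ⟨.inl i₀, h, .inl rfl⟩) (fun h => ⟨.inr i₀, h, .inr rfl⟩)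
    refine ⟨z, hzC, i₀, fun j hj => ⟨fun h => ?_, fun h => ?_⟩⟩
    · have := hfib (.inl j) x₀ h hx₀z
      rcases hx₀ with rfl | rfl <;> simp_all
    · have := hfib (.inr j) x₀ h hx₀z
      rcases hx₀ with rfl | rfl <;> simp_all
  · push Not at hocc
    exact ⟨z, hzC, Classical.arbitrary ι, fun j _ => hocc j⟩

namespace SimpleGraph

variable {V : Type*} {G : SimpleGraph V}

theorem Walk.IsPath.exists_prepend {s a b : V} {Q : G.Walk a b} (hQ : Q.IsPath)
    (h : s = a ∨ G.Adj s a ∧ s ∉ Q.support) :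
    ∃ W : G.Walk s b, W.IsPath ∧ W.support ⊆ s :: Q.support ∧ W.edges ⊆ s(s, a) :: Q.edges := by
  rcases h with rfl | ⟨hadj, hs⟩
  · exact ⟨Q, hQ, List.subset_cons_self _ _, List.subset_cons_self _ _⟩
  · exact ⟨.cons hadj Q, hQ.cons hs, by simp, by simp⟩

theorem Walk.IsPath.exists_extend_ends {C : Finset V} {s t a b : V} {Q : G.Walk a b}
    (hQ : Q.IsPath) (hQC : ∀ x ∈ Q.support, x ∈ C) (hst : s ≠ t)
    (hs : s = a ∨ s ∉ C ∧ G.Adj s a) (ht : t = b ∨ t ∉ C ∧ G.Adj t b) :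
    ∃ W : G.Walk s t, W.IsPath ∧ W.edges ⊆ s(s, a) :: s(t, b) :: Q.edges := by
  obtain ⟨W₁, hW₁, hW₁s, hW₁e⟩ :=
    hQ.exists_prepend (hs.imp_right fun h => ⟨h.2, fun hmem => h.1 (hQC s hmem)⟩)
  have ht' : t = b ∨ G.Adj t b ∧ t ∉ W₁.reverse.support := by
    refine ht.imp_right fun h => ⟨h.2, fun hmem => ?_⟩
    rw [Walk.support_reverse, List.mem_reverse] at hmem
    rcases List.mem_cons.mp (hW₁s hmem) with rfl | hmem
    · exact hst rfl
    · exact h.1 (hQC t hmem)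
  obtain ⟨W₂, hW₂, -, hW₂e⟩ := hW₁.reverse.exists_prepend ht'
  refine ⟨W₂.reverse, hW₂.reverse, fun e he => ?_⟩
  rw [Walk.edges_reverse, List.mem_reverse] at he
  rcases List.mem_cons.mp (hW₂e he) with rfl | he
  · simp
  rw [Walk.edges_reverse, List.mem_reverse] at he
  rcases List.mem_cons.mp (hW₁e he) with rfl | he <;> simp [he]

theorem IsClique.exists_isPath_forall_mem_edges {C : Finset V} (hC : G.IsClique (C : Set V))
    {a b z : V} (ha : a ∈ C) (hb : b ∈ C) (hz : z ∈ C) :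
    ∃ W : G.Walk a b, W.IsPath ∧ (∀ x ∈ W.support, x ∈ C) ∧ ∀ e ∈ W.edges, z ∈ e := by
  by_cases hab : a = b
  · subst hab
    exact ⟨.nil, .nil, by simpa using ha, by simp⟩
  by_cases hza : z = a ∨ z = b
  · refine ⟨.cons (hC ha hb hab) .nil, by simpa using hab, ?_, ?_⟩
    · simpa using ⟨ha, hb⟩
    · rcases hza with rfl | rfl <;> simp
  obtain ⟨hza, hzb⟩ := not_or.mp hza
  refine ⟨.cons (hC ha hz (Ne.symm hza)) (.cons (hC hz hb hzb) .nil), ?_, ?_, by simp⟩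
  · simp [Walk.isPath_def, hab, Ne.symm hza, hzb]
  · simpa using ⟨ha, hz, hb⟩

theorem IsClique.exists_edpSolution {C : Finset V} (hC : G.IsClique (C : Set V))
    {ι : Type*} [Fintype ι] (Y : ι → V × V) (hcard : Fintype.card ι < C.card)
    (hY : ∀ i, (Y i).1 ∈ C ∧ (Y i).2 ∈ C) :
    ∃ Q : WalkFamily G Y, IsEDPSolution G Y Q ∧ ∀ i, ∀ x ∈ (Q i).support, x ∈ C := by
  classical
  induction C using Finset.strongInduction generalizing ι with
  | H C ih =>
  rcases isEmpty_or_nonempty ι with hι | hι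
  · exact ⟨isEmptyElim, ⟨isEmptyElim, isEmptyElim⟩, isEmptyElim⟩
  obtain ⟨z, hzC, i₀, hz⟩ := exists_mem_forall_ne_of_card_lt Y hcard
  obtain ⟨Q', ⟨hQ'path, hQ'disj⟩, hQ'C⟩ :=
    ih (C.erase z) (erase_ssubset hzC) (hC.subset (by simp)) (fun j : {j // j ≠ i₀} => Y j)
      (by have := Fintype.card_pos (α := ι); simp [card_erase_of_mem hzC]; omega)
      (fun j => ⟨mem_erase.mpr ⟨(hz j j.2).1, (hY j).1⟩,
        mem_erase.mpr ⟨(hz j j.2).2, (hY j).2⟩⟩)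
  obtain ⟨W, hWpath, hWC, hWz⟩ := hC.exists_isPath_forall_mem_edges (hY i₀).1 (hY i₀).2 hzC
  let Q : WalkFamily G Y := fun i => if h : i = i₀ then h ▸ W else Q' ⟨i, h⟩
  have hQ₀ : Q i₀ = W := dif_pos rfl
  have hQ' : ∀ j (h : j ≠ i₀), Q j = Q' ⟨j, h⟩ := fun j h => dif_neg h
  have hQ'z : ∀ j (h : j ≠ i₀), ∀ e ∈ (Q' ⟨j, h⟩).edges, z ∉ e := fun j h e he hze =>
    (mem_erase.mp (hQ'C _ _ (Walk.mem_support_of_mem_edges he hze))).1 rfl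
  refine ⟨Q, ⟨fun i => ?_, fun i j hij e hi hj => ?_⟩, fun i x hx => ?_⟩
  · by_cases h : i = i₀
    · subst h; rw [hQ₀]; exact hWpath
    · rw [hQ' i h]; exact hQ'path _
  · by_cases hi₀ : i = i₀
    · subst hi₀; rw [hQ₀] at hi; rw [hQ' j (Ne.symm hij)] at hj
      exact hQ'z j _ e hj (hWz e hi)
    by_cases hj₀ : j = i₀
    · subst hj₀; rw [hQ₀] at hj; rw [hQ' i hi₀] at hi
      exact hQ'z i _ e hi (hWz e hj)
    rw [hQ' i hi₀] at hi; rw [hQ' j hj₀] at hj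
    exact hQ'disj ⟨i, hi₀⟩ ⟨j, hj₀⟩ (fun h => hij (congrArg Subtype.val h)) e hi hj
  · by_cases h : i = i₀
    · subst h; rw [hQ₀] at hx; exact hWC x hx
    · rw [hQ' i h] at hx; exact mem_of_mem_erase (hQ'C _ x hx)

end SimpleGraph

section Ports

variable {V ι : Type*} {G : SimpleGraph V}

theorem IsSplitPartition.isClique {C I : Finset V} (hsplit : IsSplitPartition G C I) :
    G.IsClique (C : Set V) :=
  fun x hx y hy => hsplit.2.2.1 x hx y hy

theorem IsSplitPartition.mem_of_adj_of_notMem {C I : Finset V} (hsplit : IsSplitPartition G C I)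
    {v w : V} (hv : v ∉ C) (hvw : G.Adj v w) : w ∈ C :=
  (hsplit.1 w).resolve_right fun hw => hsplit.2.2.2 v ((hsplit.1 v).resolve_left hv) w hw hvw

variable [DecidableEq V] [Fintype ι]

def occurrences (X : ι → V × V) (v : V) : Finset ι := {i | (X i).1 = v ∨ (X i).2 = v}

theorem mem_occurrences_fst (X : ι → V × V) (i : ι) : i ∈ occurrences X (X i).1 := by
  simp [occurrences]

theorem mem_occurrences_snd (X : ι → V × V) (i : ι) : i ∈ occurrences X (X i).2 := by
  simp [occurrences]

/-- `p v i` is the vertex of `C` at which the `i`-th path enters `C` from its endpoint `v`: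
`v` itself if `v ∈ C`, and otherwise a neighbour of `v` reserved for this pair. -/
structure IsPortAssignment (G : SimpleGraph V) (C : Finset V) (X : ι → V × V)
    (p : V → ι → V) : Prop where
  eq_self : ∀ v ∈ C, ∀ i, p v i = v
  mem : ∀ v, ∀ i ∈ occurrences X v, p v i ∈ C
  adj : ∀ v ∉ C, ∀ i ∈ occurrences X v, G.Adj v (p v i)
  injOn : ∀ v ∉ C, Set.InjOn (p v) (occurrences X v)

theorem IsSplitPartition.exists_isPortAssignment [Fintype V] [DecidableRel G.Adj]
    {C I : Finset V} (hsplit : IsSplitPartition G C I) (X : ι → V × V)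
    (hdeg : ∀ v, (occurrences X v).card ≤ G.degree v) :
    ∃ p, IsPortAssignment G C X p := by
  have hnbr : ∀ v, ∃ g : ι → V, (∀ i ∈ occurrences X v, G.Adj v (g i)) ∧
      Set.InjOn g (occurrences X v) := by
    intro v
    have : Nonempty V := ⟨v⟩
    obtain ⟨g, hg, hinj⟩ := (occurrences X v).finite_toSet.exists_injOn_of_encard_le
      (t := G.neighborSet v) (by
        rw [← coe_neighborFinset, Set.encard_coe_eq_coe_finsetCard,
          Set.encard_coe_eq_coe_finsetCard, card_neighborFinset_eq_degree]
        exact_mod_cast hdeg v)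
    exact ⟨g, fun i hi => hg hi, hinj⟩
  choose g hgadj hginj using hnbr
  refine ⟨fun v i => if v ∈ C then v else g v i, ⟨fun v hv i => if_pos hv, fun v i hi => ?_,
    fun v hv i hi => ?_, fun v hv => ?_⟩⟩
  · by_cases hv : v ∈ C
    · simp [hv]
    · simpa [hv] using hsplit.mem_of_adj_of_notMem hv (hgadj v i hi)
  · simpa [hv] using hgadj v i hi
  · simpa [hv] using hginj v

theorem IsPortAssignment.edpYes {C : Finset V} {X : ι → V × V} {p : V → ι → V}
    (hp : IsPortAssignment G C X p) (hX : ∀ i, (X i).1 ≠ (X i).2)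
    {Q : WalkFamily G fun i => (p (X i).1 i, p (X i).2 i)}
    (hQ : IsEDPSolution G _ Q) (hQC : ∀ i, ∀ x ∈ (Q i).support, x ∈ C) :
    EDPYes G X := by
  have hend : ∀ v, ∀ i ∈ occurrences X v, v = p v i ∨ v ∉ C ∧ G.Adj v (p v i) := by
    intro v i hi
    by_cases hv : v ∈ C
    · exact .inl (hp.eq_self v hv i).symm
    · exact .inr ⟨hv, hp.adj v hv i hi⟩
  choose W hWpath hWedges using fun i => (hQ.1 i).exists_extend_ends (hQC i) (hX i)
    (hend _ i (mem_occurrences_fst X i)) (hend _ i (mem_occurrences_snd X i))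
  have hpend : ∀ i, ∀ e ∈ (W i).edges,
      e ∈ (Q i).edges ∨ ∃ v ∉ C, i ∈ occurrences X v ∧ e = s(v, p v i) := by
    intro i e he
    have pendant : ∀ v, i ∈ occurrences X v → e = s(v, p v i) →
        ∃ v ∉ C, i ∈ occurrences X v ∧ e = s(v, p v i) := by
      rintro v hi rfl
      refine ⟨v, fun hv => ?_, hi, rfl⟩
      have hadj := (W i).adj_of_mem_edges he
      rw [hp.eq_self v hv i] at hadj
      exact hadj.ne rfl
    rcases List.mem_cons.mp (hWedges i he) with h | h
    · exact .inr (pendant _ (mem_occurrences_fst X i) h)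
    rcases List.mem_cons.mp h with h | h
    · exact .inr (pendant _ (mem_occurrences_snd X i) h)
    · exact .inl h
  refine ⟨W, hWpath, fun i j hij e hi hj => ?_⟩
  rcases hpend i e hi with hi | ⟨v, hv, hiv, rfl⟩ <;> rcases hpend j _ hj with hj | ⟨w, hw, hjw, he⟩
  · exact hQ.2 i j hij _ hi hj
  · exact hw (hQC i w (Walk.mem_support_of_mem_edges hi (he ▸ Sym2.mem_mk_left _ _)))
  · exact hv (hQC j v (Walk.mem_support_of_mem_edges hj (Sym2.mem_mk_left _ _)))
  · rcases Sym2.eq_iff.mp he with ⟨rfl, hpij⟩ | ⟨rfl, -⟩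
    · exact hij (hp.injOn v hv hiv hjw hpij)
    · exact hv (hp.mem w j hjw)

end Ports

/-- If `G` is a split graph with split partition `(C, I)`, `|C| > k`, and
every (terminal) vertex has degree at least the number of occurrences of terminal pairs
containing it, then the EDP instance is a Yes-instance. -/
theorem edp_split_large_clique_yes {V : Type*} [Fintype V] [DecidableEq V]
    (G : SimpleGraph V) [DecidableRel G.Adj]
    (C I : Finset V) (hsplit : IsSplitPartition G C I)
    {k : ℕ} (X : Fin k → V × V) (hX : ∀ i, (X i).1 ≠ (X i).2)
    (hC : k < C.card)
    (hdeg : ∀ y : V,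
      (Finset.univ.filter (fun i : Fin k => (X i).1 = y ∨ (X i).2 = y)).card ≤ G.degree y) :
    EDPYes G X := by
  obtain ⟨p, hp⟩ := hsplit.exists_isPortAssignment X hdeg
  obtain ⟨Q, hQ, hQC⟩ := hsplit.isClique.exists_edpSolution (fun i => (p (X i).1 i, p (X i).2 i))
    (by simpa using hC) fun i => ⟨hp.mem _ i (mem_occurrences_fst X i),
      hp.mem _ i (mem_occurrences_snd X i)⟩
  exact hp.edpYes hX hQ hQC
end

section
/- Let (G,𝒳,k) be a Yes-instance of VDP. If there is a terminal pair (s,t) ∈ 𝒳 with st ∈ E(G), then every minimum solution of (G,𝒳,k) contains the one-edge path P_st from s to t; that is, in every minimum solution, the path assigned to some occurrence of a terminal pair with endpoints {s,t} is exactly the single edge st. -/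
open SimpleGraph Finset

/-- No internal vertex of one walk of the family lies on any other walk. -/
def PairwiseInternallyDisjoint {V : Type*} (G : SimpleGraph V) {ι : Type*}
    (X : ι → V × V) (P : WalkFamily G X) : Prop :=
  ∀ i j : ι, i ≠ j → ∀ x : V, x ∈ (P i).support.tail.dropLast → x ∉ (P j).support

/-- A solution of the Vertex-Disjoint Paths (VDP) instance `(G, X)`: a family of pairwise
distinct paths connecting the terminal pairs that are pairwise internally vertex-disjoint. -/
def IsVDPSolution {V : Type*} (G : SimpleGraph V) {ι : Type*} (X : ι → V × V)
    (P : WalkFamily G X) : Prop :=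
  (∀ i, (P i).IsPath) ∧
  (∀ i j : ι, i ≠ j → (P i).support ≠ (P j).support) ∧
  PairwiseInternallyDisjoint G X P

/-- `(G, X)` is a Yes-instance of VDP. -/
def VDPYes {V : Type*} (G : SimpleGraph V) {ι : Type*} (X : ι → V × V) : Prop :=
  ∃ P : WalkFamily G X, IsVDPSolution G X P

/-- A minimum solution of the VDP instance `(G, X)`: a solution minimizing the total
number of edges of the paths. -/
def IsMinVDPSolution {V : Type*} (G : SimpleGraph V) {ι : Type*} [Fintype ι]
    (X : ι → V × V) (P : WalkFamily G X) : Prop :=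
  IsVDPSolution G X P ∧
    ∀ Q : WalkFamily G X, IsVDPSolution G X Q →
      ∑ i, (P i).length ≤ ∑ i, (Q i).length

namespace SimpleGraph.Walk

variable {V : Type*} {G : SimpleGraph V}

theorem eq_of_support_eq_pair {u v a b : V} {p : G.Walk u v} (h : p.support = [a, b]) :
    u = a ∧ v = b ∧ p.length = 1 := by
  refine ⟨?_, ?_, ?_⟩
  · simpa [h] using p.head_support.symm
  · simpa [h] using p.getLast_support.symm
  · simpa [h] using p.length_support

end SimpleGraph.Walk

section VDP

variable {V : Type*} {G : SimpleGraph V} {ι : Type*} {X : ι → V × V} {P : WalkFamily G X}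

theorem IsVDPSolution.update [DecidableEq ι] (hP : IsVDPSolution G X P) {i : ι}
    {w : G.Walk (X i).1 (X i).2} (hw : w.IsPath) (hsupp : w.support ⊆ (P i).support)
    (hint : w.support.tail.dropLast ⊆ (P i).support.tail.dropLast)
    (hne : ∀ j, j ≠ i → w.support ≠ (P j).support) :
    IsVDPSolution G X (Function.update P i w) := by
  obtain ⟨hpath, hdist, hdisj⟩ := hP
  refine ⟨fun j => ?_, fun j l hjl => ?_, fun j l hjl x hx => ?_⟩
  · rcases eq_or_ne j i with rfl | hj
    · simpa using hw
    · simpa [hj] using hpath j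
  · rcases eq_or_ne j i with rfl | hj
    · simpa [hjl.symm] using hne l hjl.symm
    rcases eq_or_ne l i with rfl | hl
    · simpa [hj] using (hne j hj).symm
    · simpa [hj, hl] using hdist j l hjl
  · rcases eq_or_ne j i with rfl | hj
    · simp only [Function.update_self, Function.update_of_ne hjl.symm] at hx ⊢
      exact hdisj j l hjl x (hint hx)
    rcases eq_or_ne l i with rfl | hl
    · simp only [Function.update_self, Function.update_of_ne hj] at hx ⊢
      exact fun hxw => hdisj j l hjl x hx (hsupp hxw)
    · simpa [hj, hl] using hdisj j l hjl x (by simpa [hj] using hx)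

theorem IsMinVDPSolution.length_le_of_update [Fintype ι] [DecidableEq ι]
    (hP : IsMinVDPSolution G X P) {i : ι} {w : G.Walk (X i).1 (X i).2}
    (hw : IsVDPSolution G X (Function.update P i w)) : (P i).length ≤ w.length := by
  have hsum := hP.2 _ hw
  rw [← Finset.add_sum_erase _ _ (Finset.mem_univ i),
    ← Finset.add_sum_erase _ _ (Finset.mem_univ i)] at hsum
  have hrest : ∑ j ∈ Finset.univ.erase i, (Function.update P i w j).length =
      ∑ j ∈ Finset.univ.erase i, (P j).length :=
    Finset.sum_congr rfl fun j hj => by rw [Function.update_of_ne (Finset.ne_of_mem_erase hj)]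
  simpa [hrest] using hsum

/-- Otherwise replacing the path of `i` by the edge would give a shorter solution. -/
theorem IsMinVDPSolution.exists_length_eq_one [Fintype ι] [DecidableEq ι]
    (hP : IsMinVDPSolution G X P) {i : ι} (hadj : G.Adj (X i).1 (X i).2) :
    ∃ j, X j = X i ∧ (P j).length = 1 := by
  by_contra! hlong
  have hne : ∀ j, j ≠ i → hadj.toWalk.support ≠ (P j).support := by
    intro j _ hj
    obtain ⟨h1, h2, hlen⟩ := Walk.eq_of_support_eq_pair (hadj.support_toWalk ▸ hj).symm
    exact hlong j (Prod.ext h1 h2) hlen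
  have hsupp : hadj.toWalk.support ⊆ (P i).support := by
    simp [hadj.support_toWalk, Walk.start_mem_support, Walk.end_mem_support]
  have hle := hP.length_le_of_update
    (hP.1.update hadj.isPath_toWalk hsupp (by simp [hadj.support_toWalk]) hne)
  have hpos : (P i).length ≠ 0 := fun h => hadj.ne (Walk.eq_of_length_eq_zero h)
  have hne_one := hlong i rfl
  rw [hadj.length_toWalk] at hle
  omega

end VDP

theorem min_vdp_solution_contains_edge_general {V : Type*} (G : SimpleGraph V)
    {k : ℕ} (X : Fin k → V × V)
    (s t : V) (hadj : G.Adj s t) (hmem : ∃ i : Fin k, X i = (s, t))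
    (P : WalkFamily G X) (hP : IsMinVDPSolution G X P) :
    ∃ j : Fin k, (X j = (s, t) ∨ X j = (t, s)) ∧ (P j).length = 1 := by
  obtain ⟨i, hi⟩ := hmem
  obtain ⟨j, hj, hlen⟩ := hP.exists_length_eq_one (i := i) (by rwa [hi])
  exact ⟨j, Or.inl (hj.trans hi), hlen⟩

/-- If a terminal pair `(s, t)` with `st ∈ E(G)` occurs in `X`, then every
minimum VDP solution assigns to some occurrence of a terminal pair with endpoints `{s, t}`
exactly the one-edge path `st`. -/
theorem min_vdp_solution_contains_edge {V : Type*} (G : SimpleGraph V)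
    {k : ℕ} (X : Fin k → V × V) (hX : ∀ i, (X i).1 ≠ (X i).2)
    (s t : V) (hadj : G.Adj s t) (hmem : ∃ i : Fin k, X i = (s, t))
    (P : WalkFamily G X) (hP : IsMinVDPSolution G X P) :
    ∃ j : Fin k, (X j = (s, t) ∨ X j = (t, s)) ∧ (P j).length = 1 :=
  min_vdp_solution_contains_edge_general G X s t hadj hmem P hP
end

section
/- Let (G,𝒳,k) be a Yes-instance of VDP where G is a split graph with split partition (C, I), and let 𝒫 be a minimum solution of (G,𝒳,k). If some path P ∈ 𝒫 visits a non-terminal vertex x ∈ I, then P is of the form (u', x, v'), where u', v' ∈ C are terminal vertices (the endpoints of P), and moreover the one-edge path P_{u'v'} also belongs to 𝒫. -/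
open SimpleGraph Finset

/-- `y` is a terminal vertex: it appears in at least one terminal pair of `X`. -/
def IsTerminal {V : Type*} {ι : Type*} (X : ι → V × V) (y : V) : Prop :=
  ∃ i : ι, (X i).1 = y ∨ (X i).2 = y

/-! If `x` is an inner vertex of `P i` with neighbours `a, b` on it, then `a, b ∈ C` because `I`
is independent, so `P i` can bypass `x` along the clique edge `ab`. The bypass keeps the family
internally disjoint and shortens it, so by minimality it can only fail to be a solution by
coinciding with some other path `P j`. Its inner vertices are inner vertices of `P i`, which
avoid `P j`; hence it has none, i.e. it is the edge between the endpoints of `P i`. -/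

namespace SimpleGraph.Walk

variable {V : Type*} {G : SimpleGraph V} {u v : V}

theorem support_tail_dropLast_eq_nil_iff (p : G.Walk u v) :
    p.support.tail.dropLast = [] ↔ p.length ≤ 1 := by
  rw [← List.length_eq_zero_iff, List.length_dropLast, List.length_tail, length_support]
  omega

theorem IsPath.mem_support_tail_dropLast_iff {p : G.Walk u v} (hp : p.IsPath) {y : V} :
    y ∈ p.support.tail.dropLast ↔ y ∈ p.support ∧ y ≠ u ∧ y ≠ v := by
  cases p with
  | nil => simp
  | cons h q =>
    have hnd := hp.support_nodup
    rw [support_cons] at hnd ⊢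
    rw [← List.dropLast_append_getLast q.support_ne_nil, getLast_support] at hnd ⊢
    generalize q.support.dropLast = l at hnd ⊢
    simp only [List.nodup_cons, List.nodup_append] at hnd
    grind

theorem IsPath.support_tail_dropLast_subset {p q : G.Walk u v} (hp : p.IsPath) (hq : q.IsPath)
    (h : q.support ⊆ p.support) : q.support.tail.dropLast ⊆ p.support.tail.dropLast :=
  fun y hy => by
    rw [hq.mem_support_tail_dropLast_iff] at hy
    exact hp.mem_support_tail_dropLast_iff.2 ⟨h hy.1, hy.2⟩

theorem exists_eq_append_cons_cons (p : G.Walk u v) {x : V} (hx : x ∈ p.support)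
    (hxu : x ≠ u) (hxv : x ≠ v) :
    ∃ (a b : V) (p₁ : G.Walk u a) (hax : G.Adj a x) (hxb : G.Adj x b) (p₂ : G.Walk b v),
      p = p₁.append (cons hax (cons hxb p₂)) := by
  classical
  rw [← p.take_spec hx]
  generalize p.takeUntil x hx = q₁
  generalize p.dropUntil x hx = q₂
  cases q₁ with
  | nil => exact absurd rfl hxu
  | cons h q₁ =>
  cases q₂ with
  | nil => exact absurd rfl hxv
  | cons hxb p₂ =>
  obtain ⟨a, p₁, hax, hq⟩ := exists_cons_eq_concat h q₁
  exact ⟨a, _, p₁, hax, hxb, p₂, by rw [hq, concat_append]⟩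

variable {a b x : V} (p₁ : G.Walk u a) (hab : G.Adj a b) (hax : G.Adj a x) (hxb : G.Adj x b)
  (p₂ : G.Walk b v)

theorem support_append_cons_sublist :
    (p₁.append (cons hab p₂)).support.Sublist (p₁.append (cons hax (cons hxb p₂))).support := by
  simp only [support_append, support_cons, List.tail_cons]
  exact (List.sublist_cons_self x _).append_left _

theorem length_append_cons_add_one :
    (p₁.append (cons hab p₂)).length + 1 = (p₁.append (cons hax (cons hxb p₂))).length := by
  simp only [length_append, length_cons]
  omega

theorem IsPath.ne_of_append_cons_cons (hp : (p₁.append (cons hax (cons hxb p₂))).IsPath) :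
    a ≠ b := by
  rintro rfl
  have hnd := hp.support_nodup
  simp only [support_append, support_cons, List.tail_cons, List.nodup_append] at hnd
  exact hnd.2.2 a p₁.end_mem_support a (by simp) rfl

theorem endpoints_eq_of_support_eq {u' v' : V} {p : G.Walk u v} {q : G.Walk u' v'}
    (h : p.support = q.support) : u = u' ∧ v = v' := by
  refine ⟨?_, ?_⟩
  · have hp := p.cons_tail_support
    have hq := q.cons_tail_support
    rw [h, ← hq] at hp
    exact (List.cons.inj hp).1
  · rw [← p.getLast_support, ← q.getLast_support]
    simp only [h]

theorem length_eq_of_support_eq {u' v' : V} {p : G.Walk u v} {q : G.Walk u' v'}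
    (h : p.support = q.support) : p.length = q.length := by
  simpa [length_support] using congrArg List.length h

end SimpleGraph.Walk

section VDP

variable {V ι : Type*} {G : SimpleGraph V} {X : ι → V × V}

theorem IsSplitPartition.mem_clique_of_adj {C I : Finset V} (h : IsSplitPartition G C I)
    {x y : V} (hx : x ∈ I) (hxy : G.Adj x y) : y ∈ C :=
  (h.1 y).resolve_right fun hy => h.2.2.2 x hx y hy hxy

variable [DecidableEq ι]

theorem PairwiseInternallyDisjoint.update {P : WalkFamily G X}
    (hP : PairwiseInternallyDisjoint G X P) {i : ι} {q : G.Walk (X i).1 (X i).2}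
    (hsupp : q.support ⊆ (P i).support)
    (hint : q.support.tail.dropLast ⊆ (P i).support.tail.dropLast) :
    PairwiseInternallyDisjoint G X (Function.update P i q) := by
  intro j₁ j₂ hne y hy
  rcases eq_or_ne j₁ i with rfl | h₁
  · rw [Function.update_self] at hy
    rw [Function.update_of_ne hne.symm]
    exact hP _ j₂ hne y (hint hy)
  · rw [Function.update_of_ne h₁] at hy
    rcases eq_or_ne j₂ i with rfl | h₂
    · rw [Function.update_self]
      exact fun hyq => hP j₁ _ hne y hy (hsupp hyq)
    · rw [Function.update_of_ne h₂]
      exact hP j₁ j₂ hne y hy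

theorem sum_length_update [Fintype ι] (P : WalkFamily G X) (i : ι)
    (q : G.Walk (X i).1 (X i).2) :
    ∑ j, (Function.update P i q j).length + (P i).length = ∑ j, (P j).length + q.length := by
  simp_rw [Function.apply_update (fun j (w : G.Walk (X j).1 (X j).2) => w.length)]
  rw [Finset.sum_update_of_mem (Finset.mem_univ i),
    Finset.sum_eq_add_sum_sdiff_singleton_of_mem (Finset.mem_univ i)]
  ring

theorem IsMinVDPSolution.exists_support_eq_of_length_lt [Fintype ι] {P : WalkFamily G X}
    (hP : IsMinVDPSolution G X P) {i : ι} {q : G.Walk (X i).1 (X i).2} (hq : q.IsPath)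
    (hsupp : q.support ⊆ (P i).support) (hlen : q.length < (P i).length) :
    ∃ j ≠ i, (P j).support = q.support := by
  obtain ⟨⟨hpath, hdistinct, hdisj⟩, hmin⟩ := hP
  have hint := (hpath i).support_tail_dropLast_subset hq hsupp
  by_contra! hnew
  have hsol : IsVDPSolution G X (Function.update P i q) := by
    refine ⟨fun j => ?_, fun j₁ j₂ hne => ?_, hdisj.update hsupp hint⟩
    · rcases eq_or_ne j i with rfl | hj
      · rwa [Function.update_self]
      · rw [Function.update_of_ne hj]
        exact hpath j
    · rcases eq_or_ne j₁ i with rfl | h₁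
      · rw [Function.update_self, Function.update_of_ne hne.symm]
        exact (hnew j₂ hne.symm).symm
      rcases eq_or_ne j₂ i with rfl | h₂
      · rw [Function.update_self, Function.update_of_ne h₁]
        exact hnew j₁ h₁
      rw [Function.update_of_ne h₁, Function.update_of_ne h₂]
      exact hdistinct j₁ j₂ hne
  have := hmin _ hsol
  have := sum_length_update P i q
  omega

end VDP

theorem min_vdp_solution_independent_visit_general {V : Type*} (G : SimpleGraph V)
    (C I : Finset V) (hsplit : IsSplitPartition G C I)
    {k : ℕ} (X : Fin k → V × V)
    (P : WalkFamily G X) (hP : IsMinVDPSolution G X P)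
    (i : Fin k) (x : V) (hxI : x ∈ I) (hxnt : ¬ IsTerminal X x)
    (hxP : x ∈ (P i).support) :
    (P i).support = [(X i).1, x, (X i).2] ∧ (X i).1 ∈ C ∧ (X i).2 ∈ C ∧
      ∃ j : Fin k, (X j = ((X i).1, (X i).2) ∨ X j = ((X i).2, (X i).1)) ∧
        (P j).length = 1 := by
  have hpath : (P i).IsPath := hP.1.1 i
  obtain ⟨a, b, p₁, hax, hxb, p₂, hPi⟩ := (P i).exists_eq_append_cons_cons hxP
    (fun h => hxnt ⟨i, .inl h.symm⟩) (fun h => hxnt ⟨i, .inr h.symm⟩)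
  have haC : a ∈ C := hsplit.mem_clique_of_adj hxI hax.symm
  have hbC : b ∈ C := hsplit.mem_clique_of_adj hxI hxb
  have hab : G.Adj a b := hsplit.2.2.1 a haC b hbC ((hPi ▸ hpath).ne_of_append_cons_cons)
  set q := p₁.append (.cons hab p₂)
  have hsub := Walk.support_append_cons_sublist p₁ hab hax hxb p₂
  have hq : q.IsPath := .mk' (hsub.nodup (hPi ▸ hpath).support_nodup)
  have hsupp : q.support ⊆ (P i).support := hPi ▸ hsub.subset
  have hlen : q.length + 1 = (P i).length := hPi ▸ Walk.length_append_cons_add_one ..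
  obtain ⟨j, hji, hj⟩ := hP.exists_support_eq_of_length_lt hq hsupp (by omega)
  have hq_len : q.length ≤ 1 := q.support_tail_dropLast_eq_nil_iff.1 <|
    List.eq_nil_iff_forall_not_mem.2 fun y hy =>
      hP.1.2.2 i j hji.symm y (hpath.support_tail_dropLast_subset hq hsupp hy)
        (hj ▸ List.mem_of_mem_tail (List.mem_of_mem_dropLast hy))
  cases p₁ with
  | cons => simp [q] at hq_len
  | nil =>
  cases p₂ with
  | cons => simp [q] at hq_len
  | nil =>
  obtain ⟨hj₁, hj₂⟩ := Walk.endpoints_eq_of_support_eq hj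
  exact ⟨by rw [hPi]; rfl, haC, hbC, j, .inl (Prod.ext hj₁ hj₂), Walk.length_eq_of_support_eq hj⟩

/-- In a minimum VDP solution on a split graph, a path visiting a
non-terminal vertex `x` of the independent side has the form `(u', x, v')` with `u', v'`
in the clique side, and the one-edge path between `u'` and `v'` also belongs to the
solution. -/
theorem min_vdp_solution_independent_visit {V : Type*} (G : SimpleGraph V)
    (C I : Finset V) (hsplit : IsSplitPartition G C I)
    {k : ℕ} (X : Fin k → V × V) (hX : ∀ i, (X i).1 ≠ (X i).2)
    (P : WalkFamily G X) (hP : IsMinVDPSolution G X P)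
    (i : Fin k) (x : V) (hxI : x ∈ I) (hxnt : ¬ IsTerminal X x)
    (hxP : x ∈ (P i).support) :
    (P i).support = [(X i).1, x, (X i).2] ∧ (X i).1 ∈ C ∧ (X i).2 ∈ C ∧
      ∃ j : Fin k, (X j = ((X i).1, (X i).2) ∨ X j = ((X i).2, (X i).1)) ∧
        (P j).length = 1 :=
  min_vdp_solution_independent_visit_general G C I hsplit X P hP i x hxI hxnt hxP
end

section
/- Let B be a complete graph on n vertices and let u, w be two distinct vertices of B. Let 𝒳_B be a multiset of pairs of distinct vertices of B, and let a be the number of occurrences in 𝒳_B of the pair {u,w}, b the number of occurrences of pairs {u,x} with x ∉ {u,w}, c the number of occurrences of pairs {w,x} with x ∉ {u,w}, and d the number of occurrences of pairs with both endpoints outside {u,w}. If n > max{a+b, a+c} and n > d + 2 + max{b+c−1, 0}, then (B, 𝒳_B, |𝒳_B|) is a Yes-instance of EDP. -/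
open SimpleGraph Finset

section Aux
set_option linter.unusedSectionVars false

variable {V : Type*} [Fintype V] [DecidableEq V]

def GoodRouting (B : SimpleGraph V) {ι : Type*} (S : Finset V) (X : ι → V × V) : Prop :=
  ∃ P : WalkFamily B X, (∀ i, (P i).IsPath) ∧ (∀ i, ∀ v ∈ (P i).support, v ∈ S) ∧
    PairwiseEdgeDisjoint B X P

def stepX {ι : Type*} (X : ι → V × V) (x : V) (p : ι → V) (i : ι) : V × V :=
  if (X i).1 = x then (p i, (X i).2)
  else if (X i).2 = x then ((X i).1, p i)
  else X i


lemma exists_port_fun {α : Type*} [DecidableEq α] (s : Finset α) (t : Finset V)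
    (h : s.card ≤ t.card) (j : V) :
    ∃ f : α → V, (∀ i ∈ s, f i ∈ t) ∧ (∀ i ∈ s, ∀ k ∈ s, f i = f k → i = k) := by
  obtain ⟨t', ht'sub, ht'card⟩ := Finset.exists_subset_card_eq h
  have e : (s : Finset α) ≃ t' := Finset.equivOfCardEq ht'card.symm
  refine ⟨fun i => if h : i ∈ s then (e ⟨i, h⟩ : V) else j, ?_, ?_⟩
  · intro i hi
    simp only [dif_pos hi]
    exact ht'sub (e ⟨i, hi⟩).2
  · intro i hi k hk hik
    simp only [dif_pos hi, dif_pos hk] at hik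
    have : e ⟨i, hi⟩ = e ⟨k, hk⟩ := Subtype.ext hik
    have := e.injective this
    exact congrArg Subtype.val this

lemma stepX_mem {ι : Type*} (X : ι → V × V) (S : Finset V) (x : V) (p : ι → V)
    (hX : ∀ i, (X i).1 ∈ S ∧ (X i).2 ∈ S ∧ (X i).1 ≠ (X i).2)
    (hp1 : ∀ i, ((X i).1 = x ∨ (X i).2 = x) → p i ∈ S.erase x) (i : ι) :
    (stepX X x p i).1 ∈ S.erase x ∧ (stepX X x p i).2 ∈ S.erase x := by
  obtain ⟨hm1, hm2, hne⟩ := hX i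
  unfold stepX
  by_cases h1 : (X i).1 = x
  · simp only [if_pos h1]
    exact ⟨hp1 i (Or.inl h1), Finset.mem_erase.2 ⟨fun h => hne (h1.trans h.symm), hm2⟩⟩
  · by_cases h2 : (X i).2 = x
    · simp only [if_neg h1, if_pos h2]
      exact ⟨Finset.mem_erase.2 ⟨fun h => h1 h, hm1⟩, hp1 i (Or.inr h2)⟩
    · simp only [if_neg h1, if_neg h2]
      exact ⟨Finset.mem_erase.2 ⟨h1, hm1⟩, Finset.mem_erase.2 ⟨h2, hm2⟩⟩


lemma stepX_eq1 {ι : Type*} (X : ι → V × V) (x : V) (p : ι → V) (i : ι)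
    (h : (X i).1 = x) : stepX X x p i = (p i, (X i).2) := by simp [stepX, h]

lemma stepX_eq2 {ι : Type*} (X : ι → V × V) (x : V) (p : ι → V) (i : ι)
    (h1 : (X i).1 ≠ x) (h2 : (X i).2 = x) : stepX X x p i = ((X i).1, p i) := by
  simp [stepX, h1, h2]

lemma stepX_eq3 {ι : Type*} (X : ι → V × V) (x : V) (p : ι → V) (i : ι)
    (h1 : (X i).1 ≠ x) (h2 : (X i).2 ≠ x) : stepX X x p i = X i := by
  simp [stepX, h1, h2]

lemma step {ι : Type*} (B : SimpleGraph V)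
    (hcomplete : ∀ x y : V, x ≠ y → B.Adj x y)
    (S : Finset V) (x : V) (hxS : x ∈ S)
    (X : ι → V × V)
    (hX : ∀ i, (X i).1 ∈ S ∧ (X i).2 ∈ S ∧ (X i).1 ≠ (X i).2)
    (p : ι → V)
    (hp1 : ∀ i, ((X i).1 = x ∨ (X i).2 = x) → p i ∈ S.erase x)
    (hp2 : ∀ i j, ((X i).1 = x ∨ (X i).2 = x) → ((X j).1 = x ∨ (X j).2 = x) →
      p i = p j → i = j)
    (h' : GoodRouting B (S.erase x)
      (fun i : {i : ι // (stepX X x p i).1 ≠ (stepX X x p i).2} => stepX X x p i.val)) :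
    GoodRouting B S X := by
  obtain ⟨P', hP'path, hP'supp, hP'disj⟩ := h'
  have hpx : ∀ i, ((X i).1 = x ∨ (X i).2 = x) → p i ≠ x :=
    fun i h => (Finset.mem_erase.1 (hp1 i h)).1
  have hexists : ∀ i : ι, ∃ W : B.Walk (X i).1 (X i).2, W.IsPath ∧
      (∀ v ∈ W.support, v ∈ S) ∧
      (∀ e ∈ W.edges, (e = s(x, p i) ∧ ((X i).1 = x ∨ (X i).2 = x)) ∨
        ∃ h2 : (stepX X x p i).1 ≠ (stepX X x p i).2, e ∈ (P' ⟨i, h2⟩).edges) := by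
    intro i
    obtain ⟨hm1, hm2, hne⟩ := hX i
    by_cases h1 : (X i).1 = x
    · by_cases h2 : (stepX X x p i).1 ≠ (stepX X x p i).2
      · have e1 : (stepX X x p i).1 = p i := by simp [stepX, h1]
        have e2 : (stepX X x p i).2 = (X i).2 := by simp [stepX, h1]
        refine ⟨(Walk.cons (hcomplete x (p i) (Ne.symm (hpx i (Or.inl h1))))
          ((P' ⟨i, h2⟩).copy e1 e2)).copy h1.symm rfl, ?_, ?_, ?_⟩
        · rw [Walk.isPath_copy, Walk.cons_isPath_iff]
          refine ⟨(Walk.isPath_copy _ _ _).2 (hP'path ⟨i, h2⟩), fun hx' => ?_⟩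
          rw [Walk.support_copy] at hx'
          exact absurd (hP'supp ⟨i, h2⟩ x hx') (by simp)
        · intro v hv
          rw [Walk.support_copy, Walk.support_cons] at hv
          rcases List.mem_cons.1 hv with rfl | hv
          · exact hxS
          · rw [Walk.support_copy] at hv
            exact Finset.mem_of_mem_erase (hP'supp ⟨i, h2⟩ v hv)
        · intro e he
          rw [Walk.edges_copy, Walk.edges_cons] at he
          rcases List.mem_cons.1 he with rfl | he
          · exact Or.inl ⟨rfl, Or.inl h1⟩
          · rw [Walk.edges_copy] at he
            exact Or.inr ⟨h2, he⟩
      · push_neg at h2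
        have hpi : p i = (X i).2 := by simpa [stepX, h1] using h2
        refine ⟨Walk.cons (hcomplete _ _ hne) Walk.nil, ?_, ?_, ?_⟩
        · simp [Walk.cons_isPath_iff, hne]
        · intro v hv
          simp only [Walk.support_cons, Walk.support_nil] at hv
          rcases List.mem_cons.1 hv with rfl | hv
          · exact hm1
          · rcases List.mem_singleton.1 hv with rfl
            exact hm2
        · intro e he
          simp only [Walk.edges_cons, Walk.edges_nil] at he
          rcases List.mem_singleton.1 he with rfl
          exact Or.inl ⟨by rw [h1, hpi], Or.inl h1⟩
    · by_cases h3 : (X i).2 = x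
      · by_cases h2 : (stepX X x p i).1 ≠ (stepX X x p i).2
        · have e1 : (stepX X x p i).1 = (X i).1 := by simp [stepX, h1, h3]
          have e2 : (stepX X x p i).2 = p i := by simp [stepX, h1, h3]
          refine ⟨((Walk.cons (hcomplete x (p i) (Ne.symm (hpx i (Or.inr h3))))
            (((P' ⟨i, h2⟩).copy e1 e2).reverse)).reverse).copy rfl h3.symm, ?_, ?_, ?_⟩
          · rw [Walk.isPath_copy, Walk.isPath_reverse_iff, Walk.cons_isPath_iff]
            refine ⟨(Walk.isPath_reverse_iff _).2 ((Walk.isPath_copy _ _ _).2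
              (hP'path ⟨i, h2⟩)), fun hx' => ?_⟩
            rw [Walk.support_reverse, List.mem_reverse, Walk.support_copy] at hx'
            exact absurd (hP'supp ⟨i, h2⟩ x hx') (by simp)
          · intro v hv
            rw [Walk.support_copy, Walk.support_reverse, List.mem_reverse,
              Walk.support_cons] at hv
            rcases List.mem_cons.1 hv with rfl | hv
            · exact hxS
            · rw [Walk.support_reverse, List.mem_reverse, Walk.support_copy] at hv
              exact Finset.mem_of_mem_erase (hP'supp ⟨i, h2⟩ v hv)
          · intro e he
            rw [Walk.edges_copy, Walk.edges_reverse, List.mem_reverse,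
              Walk.edges_cons] at he
            rcases List.mem_cons.1 he with rfl | he
            · exact Or.inl ⟨rfl, Or.inr h3⟩
            · rw [Walk.edges_reverse, List.mem_reverse, Walk.edges_copy] at he
              exact Or.inr ⟨h2, he⟩
        · push_neg at h2
          have hpi : p i = (X i).1 := by
            have := h2
            simp only [stepX, if_neg h1, if_pos h3] at this
            exact this.symm
          refine ⟨Walk.cons (hcomplete _ _ hne) Walk.nil, ?_, ?_, ?_⟩
          · simp [Walk.cons_isPath_iff, hne]
          · intro v hv
            simp only [Walk.support_cons, Walk.support_nil] at hv
            rcases List.mem_cons.1 hv with rfl | hv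
            · exact hm1
            · rcases List.mem_singleton.1 hv with rfl
              exact hm2
          · intro e he
            simp only [Walk.edges_cons, Walk.edges_nil] at he
            rcases List.mem_singleton.1 he with rfl
            refine Or.inl ⟨?_, Or.inr h3⟩
            rw [← h3, hpi, Sym2.eq_swap]
      · have hne' : (stepX X x p i).1 ≠ (stepX X x p i).2 := by
          simpa [stepX, h1, h3] using hne
        have e1 : (stepX X x p i).1 = (X i).1 := by simp [stepX, h1, h3]
        have e2 : (stepX X x p i).2 = (X i).2 := by simp [stepX, h1, h3]
        refine ⟨(P' ⟨i, hne'⟩).copy e1 e2, ?_, ?_, ?_⟩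
        · exact (Walk.isPath_copy _ _ _).2 (hP'path ⟨i, hne'⟩)
        · intro v hv
          rw [Walk.support_copy] at hv
          exact Finset.mem_of_mem_erase (hP'supp ⟨i, hne'⟩ v hv)
        · intro e he
          rw [Walk.edges_copy] at he
          exact Or.inr ⟨hne', he⟩
  choose W hWpath hWsupp hWedge using hexists
  refine ⟨W, hWpath, hWsupp, ?_⟩
  intro i j hij e hei hej
  rcases hWedge i e hei with ⟨hei', hix⟩ | ⟨h2i, hei'⟩
  · rcases hWedge j e hej with ⟨hej', hjx⟩ | ⟨h2j, hej'⟩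
    · rw [hei'] at hej'
      rw [Sym2.eq_iff] at hej'
      rcases hej' with ⟨-, hpp⟩ | ⟨hxp, hpx'⟩
      · exact hij (hp2 i j hix hjx hpp)
      · exact hpx i hix hpx'
    · subst hei'
      have := Walk.fst_mem_support_of_mem_edges (P' ⟨j, h2j⟩) hej'
      exact absurd (hP'supp ⟨j, h2j⟩ x this) (by simp)
  · rcases hWedge j e hej with ⟨hej', hjx⟩ | ⟨h2j, hej'⟩
    · subst hej'
      have := Walk.fst_mem_support_of_mem_edges (P' ⟨i, h2i⟩) hei'
      exact absurd (hP'supp ⟨i, h2i⟩ x this) (by simp)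
    · exact hP'disj ⟨i, h2i⟩ ⟨j, h2j⟩ (fun h => hij (congrArg Subtype.val h)) e hei' hej'

lemma routeL (B : SimpleGraph V) (hcomplete : ∀ x y : V, x ≠ y → B.Adj x y) :
    ∀ (r : ℕ) {ι : Type} [Fintype ι] [DecidableEq ι] (X : ι → V × V) (S : Finset V),
      Fintype.card ι ≤ r →
      (∀ i, (X i).1 ∈ S ∧ (X i).2 ∈ S ∧ (X i).1 ≠ (X i).2) →
      Fintype.card ι < S.card → GoodRouting B S X := by
  intro r
  induction r with
  | zero =>
    intro ι _ _ X S hcard hX hlt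
    have : IsEmpty ι := Fintype.card_eq_zero_iff.1 (Nat.le_zero.1 hcard)
    exact ⟨fun i => isEmptyElim i, fun i => isEmptyElim i, fun i => isEmptyElim i,
      fun i => isEmptyElim i⟩
  | succ r ih =>
    intro ι _ _ X S hcard hX hlt
    rcases isEmpty_or_nonempty ι with hE | hNE
    · exact ⟨fun i => isEmptyElim i, fun i => isEmptyElim i, fun i => isEmptyElim i,
        fun i => isEmptyElim i⟩
    · obtain ⟨i₀⟩ := hNE
      have hxS : (X i₀).1 ∈ S := (hX i₀).1
      have hyS : (X i₀).2 ∈ S.erase (X i₀).1 :=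
        Finset.mem_erase.2 ⟨fun h => (hX i₀).2.2 h.symm, (hX i₀).2.1⟩
      have hi₀I : i₀ ∈ (univ.filter (fun i => (X i).1 = (X i₀).1 ∨ (X i).2 = (X i₀).1)) := by
        simp
      have hcard2 : (((univ.filter (fun i => (X i).1 = (X i₀).1 ∨ (X i).2 = (X i₀).1))).erase i₀).card
          ≤ ((S.erase (X i₀).1).erase ((X i₀).2)).card := by
        have hIle : (univ.filter (fun i => (X i).1 = (X i₀).1 ∨ (X i).2 = (X i₀).1)).card
            ≤ Fintype.card ι := by
          simpa using Finset.card_le_card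
            (Finset.subset_univ (univ.filter (fun i => (X i).1 = (X i₀).1 ∨ (X i).2 = (X i₀).1)))
        have he1 := Finset.card_erase_of_mem hi₀I
        have he2 := Finset.card_erase_of_mem hyS
        have he3 := Finset.card_erase_of_mem hxS
        omega
      obtain ⟨g, hg1, hg2⟩ := exists_port_fun
        ((univ.filter (fun i => (X i).1 = (X i₀).1 ∨ (X i).2 = (X i₀).1)).erase i₀)
        ((S.erase (X i₀).1).erase ((X i₀).2)) hcard2 (X i₀).1
      have hp1 : ∀ i, ((X i).1 = (X i₀).1 ∨ (X i).2 = (X i₀).1) →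
          (if i = i₀ then (X i₀).2 else g i) ∈ S.erase (X i₀).1 := by
        intro i hi
        by_cases h : i = i₀
        · subst h; simpa using hyS
        · have hiI : i ∈ (univ.filter
              (fun i => (X i).1 = (X i₀).1 ∨ (X i).2 = (X i₀).1)).erase i₀ :=
            Finset.mem_erase.2 ⟨h, by simpa using hi⟩
          simpa [h] using Finset.mem_of_mem_erase (hg1 i hiI)
      have hp2 : ∀ i j, ((X i).1 = (X i₀).1 ∨ (X i).2 = (X i₀).1) →
          ((X j).1 = (X i₀).1 ∨ (X j).2 = (X i₀).1) →
          (if i = i₀ then (X i₀).2 else g i) = (if j = i₀ then (X i₀).2 else g j) → i = j := by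
        intro i j hi hj hpp
        by_cases h : i = i₀ <;> by_cases h' : j = i₀
        · rw [h, h']
        · exfalso
          rw [if_pos h, if_neg h'] at hpp
          have hjI : j ∈ (univ.filter
              (fun i => (X i).1 = (X i₀).1 ∨ (X i).2 = (X i₀).1)).erase i₀ :=
            Finset.mem_erase.2 ⟨h', by simpa using hj⟩
          exact (Finset.mem_erase.1 (hg1 j hjI)).1 hpp.symm
        · exfalso
          rw [if_neg h, if_pos h'] at hpp
          have hiI : i ∈ (univ.filter
              (fun i => (X i).1 = (X i₀).1 ∨ (X i).2 = (X i₀).1)).erase i₀ :=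
            Finset.mem_erase.2 ⟨h, by simpa using hi⟩
          exact (Finset.mem_erase.1 (hg1 i hiI)).1 hpp
        · rw [if_neg h, if_neg h'] at hpp
          have hiI : i ∈ (univ.filter
              (fun i => (X i).1 = (X i₀).1 ∨ (X i).2 = (X i₀).1)).erase i₀ :=
            Finset.mem_erase.2 ⟨h, by simpa using hi⟩
          have hjI : j ∈ (univ.filter
              (fun i => (X i).1 = (X i₀).1 ∨ (X i).2 = (X i₀).1)).erase i₀ :=
            Finset.mem_erase.2 ⟨h', by simpa using hj⟩
          exact hg2 i hiI j hjI hpp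
      refine step B hcomplete S (X i₀).1 hxS X hX
        (fun i => if i = i₀ then (X i₀).2 else g i) hp1 hp2 ?_
      have hdeg : ¬ ((stepX X (X i₀).1 (fun i => if i = i₀ then (X i₀).2 else g i) i₀).1 ≠
          (stepX X (X i₀).1 (fun i => if i = i₀ then (X i₀).2 else g i) i₀).2) := by
        simp [stepX]
      have hcardlt : Fintype.card {i : ι // (stepX X (X i₀).1
          (fun i => if i = i₀ then (X i₀).2 else g i) i).1 ≠
          (stepX X (X i₀).1 (fun i => if i = i₀ then (X i₀).2 else g i) i).2} <
          Fintype.card ι := Fintype.card_subtype_lt hdeg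
      have hecard := Finset.card_erase_of_mem hxS
      refine ih _ _ ?_ ?_ ?_
      · omega
      · intro i
        obtain ⟨hm1, hm2⟩ := stepX_mem X S (X i₀).1
          (fun i => if i = i₀ then (X i₀).2 else g i) hX hp1 i.val
        exact ⟨hm1, hm2, i.prop⟩
      · omega

lemma auxMain (B : SimpleGraph V) (hcomplete : ∀ x y : V, x ≠ y → B.Adj x y)
    (u w : V) (huw : u ≠ w)
    {K : ℕ} (X : Fin K → V × V)
    (hX : ∀ i, (X i).1 ≠ (X i).2)
    (p₁ p₂ : Fin K → V) (T : Finset (Fin K))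
    (h1m : ∀ i, ((X i).1 = u ∨ (X i).2 = u) → p₁ i ∈ univ.erase u)
    (h1i : ∀ i j, ((X i).1 = u ∨ (X i).2 = u) → ((X j).1 = u ∨ (X j).2 = u) →
      p₁ i = p₁ j → i = j)
    (h2m : ∀ i, (stepX X u p₁ i).1 ≠ (stepX X u p₁ i).2 →
      ((stepX X u p₁ i).1 = w ∨ (stepX X u p₁ i).2 = w) → p₂ i ∈ (univ.erase u).erase w)
    (h2i : ∀ i j, (stepX X u p₁ i).1 ≠ (stepX X u p₁ i).2 →
      ((stepX X u p₁ i).1 = w ∨ (stepX X u p₁ i).2 = w) →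
      (stepX X u p₁ j).1 ≠ (stepX X u p₁ j).2 →
      ((stepX X u p₁ j).1 = w ∨ (stepX X u p₁ j).2 = w) →
      p₂ i = p₂ j → i = j)
    (hT : ∀ i, (stepX X u p₁ i).1 ≠ (stepX X u p₁ i).2 →
      (stepX (stepX X u p₁) w p₂ i).1 ≠ (stepX (stepX X u p₁) w p₂ i).2 → i ∈ T)
    (hTcard : T.card < ((univ.erase u).erase w).card) :
    GoodRouting B (univ : Finset V) X := by
  have hXm : ∀ i, (X i).1 ∈ (univ : Finset V) ∧ (X i).2 ∈ (univ : Finset V) ∧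
      (X i).1 ≠ (X i).2 := fun i => ⟨Finset.mem_univ _, Finset.mem_univ _, hX i⟩
  apply step B hcomplete univ u (Finset.mem_univ u) X hXm p₁ h1m h1i
  have hX1m : ∀ i : {i : Fin K // (stepX X u p₁ i).1 ≠ (stepX X u p₁ i).2},
      (stepX X u p₁ i.val).1 ∈ univ.erase u ∧ (stepX X u p₁ i.val).2 ∈ univ.erase u ∧
      (stepX X u p₁ i.val).1 ≠ (stepX X u p₁ i.val).2 := by
    intro i
    obtain ⟨hm1, hm2⟩ := stepX_mem X univ u p₁ hXm h1m i.val
    exact ⟨hm1, hm2, i.prop⟩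
  have hwS : w ∈ (univ : Finset V).erase u :=
    Finset.mem_erase.2 ⟨huw.symm, Finset.mem_univ w⟩
  apply step B hcomplete (univ.erase u) w hwS _ hX1m (fun i => p₂ i.val)
    (fun i hi => h2m i.val i.prop hi)
    (fun i j hi hj hij => Subtype.ext (h2i i.val j.val i.prop hi j.prop hj hij))
  refine routeL B hcomplete (Fintype.card _) _ _ le_rfl ?_ ?_
  · intro i
    obtain ⟨hm1, hm2⟩ := stepX_mem
      (fun i : {i : Fin K // (stepX X u p₁ i).1 ≠ (stepX X u p₁ i).2} =>
        stepX X u p₁ i.val) (univ.erase u) w (fun i => p₂ i.val) hX1m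
      (fun i hi => h2m i.val i.prop hi) i.val
    exact ⟨hm1, hm2, i.prop⟩
  · have hinj : Function.Injective
        (fun j : {j : {i : Fin K // (stepX X u p₁ i).1 ≠ (stepX X u p₁ i).2} //
          (stepX (fun i : {i : Fin K // (stepX X u p₁ i).1 ≠ (stepX X u p₁ i).2} =>
            stepX X u p₁ i.val) w (fun i => p₂ i.val) j).1 ≠
          (stepX (fun i : {i : Fin K // (stepX X u p₁ i).1 ≠ (stepX X u p₁ i).2} =>
            stepX X u p₁ i.val) w (fun i => p₂ i.val) j).2} =>
          (⟨j.val.val, hT j.val.val j.val.prop j.prop⟩ : {x // x ∈ T})) := by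
      intro j k hjk
      simp only [Subtype.mk.injEq] at hjk
      exact Subtype.ext (Subtype.ext hjk)
    have hle := Fintype.card_le_of_injective _ hinj
    rw [Fintype.card_coe] at hle
    omega

end Aux

/-- On a complete graph `B` with distinguished distinct vertices `u, w`,
with `a, b, c, d` counting the occurrences of terminal pairs of the four types, if
`n > max (a+b) (a+c)` and `n > d + 2 + max (b+c-1) 0`, then the instance is a
Yes-instance of EDP. -/
theorem edp_clique_path_block_yes {V : Type*} [Fintype V] [DecidableEq V]
    (B : SimpleGraph V) (hcomplete : ∀ x y : V, x ≠ y → B.Adj x y)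
    (u w : V) (huw : u ≠ w)
    {K : ℕ} (X : Fin K → V × V) (hX : ∀ i, (X i).1 ≠ (X i).2)
    (a b c d : ℕ)
    (ha : a = (Finset.univ.filter (fun i : Fin K => X i = (u, w) ∨ X i = (w, u))).card)
    (hb : b = (Finset.univ.filter (fun i : Fin K =>
      ((X i).1 = u ∧ (X i).2 ≠ u ∧ (X i).2 ≠ w) ∨
      ((X i).2 = u ∧ (X i).1 ≠ u ∧ (X i).1 ≠ w))).card)
    (hc : c = (Finset.univ.filter (fun i : Fin K =>
      ((X i).1 = w ∧ (X i).2 ≠ u ∧ (X i).2 ≠ w) ∨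
      ((X i).2 = w ∧ (X i).1 ≠ u ∧ (X i).1 ≠ w))).card)
    (hd : d = (Finset.univ.filter (fun i : Fin K =>
      (X i).1 ≠ u ∧ (X i).1 ≠ w ∧ (X i).2 ≠ u ∧ (X i).2 ≠ w)).card)
    (h1 : max (a + b) (a + c) < Fintype.card V)
    (h2 : (d : ℤ) + 2 + max ((b : ℤ) + (c : ℤ) - 1) 0 < (Fintype.card V : ℤ)) :
    EDPYes B X := by
  have hwu : w ≠ u := huw.symm
  suffices hGR : GoodRouting B (univ : Finset V) X by
    obtain ⟨P, hP1, hP2, hP3⟩ := hGR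
    exact ⟨P, hP1, hP3⟩
  rcases Nat.eq_zero_or_pos K with hK0 | hKpos
  · subst hK0
    exact ⟨fun i => i.elim0, fun i => i.elim0, fun i => i.elim0, fun i => i.elim0⟩
  set n := Fintype.card V with hn
  set CA := (Finset.univ.filter (fun i : Fin K => X i = (u, w) ∨ X i = (w, u))) with hCA
  set CB := (Finset.univ.filter (fun i : Fin K =>
      ((X i).1 = u ∧ (X i).2 ≠ u ∧ (X i).2 ≠ w) ∨
      ((X i).2 = u ∧ (X i).1 ≠ u ∧ (X i).1 ≠ w))) with hCB
  set CC := (Finset.univ.filter (fun i : Fin K =>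
      ((X i).1 = w ∧ (X i).2 ≠ u ∧ (X i).2 ≠ w) ∨
      ((X i).2 = w ∧ (X i).1 ≠ u ∧ (X i).1 ≠ w))) with hCC
  set CD := (Finset.univ.filter (fun i : Fin K =>
      (X i).1 ≠ u ∧ (X i).1 ≠ w ∧ (X i).2 ≠ u ∧ (X i).2 ≠ w)) with hCD
  clear_value n CA CB CC CD
  have hZw : w ∈ (univ : Finset V).erase u := Finset.mem_erase.2 ⟨hwu, Finset.mem_univ w⟩
  have hcave : ((univ : Finset V).erase u).card = n - 1 := by
    rw [Finset.card_erase_of_mem (Finset.mem_univ u), Finset.card_univ]; omega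
  have hZcard : (((univ : Finset V).erase u).erase w).card = n - 2 := by
    rw [Finset.card_erase_of_mem hZw, hcave]; omega
  have hn2 : 2 ≤ n := by
    have hle : ({u, w} : Finset V).card ≤ n := by
      rw [hn, ← Finset.card_univ]
      exact Finset.card_le_card (Finset.subset_univ _)
    rwa [Finset.card_pair huw] at hle
  have hZSmem : ∀ v : V, v ≠ u → v ≠ w → v ∈ ((univ : Finset V).erase u).erase w :=
    fun v hvu hvw => Finset.mem_erase.2 ⟨hvw, Finset.mem_erase.2 ⟨hvu, Finset.mem_univ v⟩⟩
  have hZSne : ∀ v ∈ ((univ : Finset V).erase u).erase w, v ≠ u ∧ v ≠ w := by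
    intro v hv
    exact ⟨(Finset.mem_erase.1 (Finset.mem_of_mem_erase hv)).1, (Finset.mem_erase.1 hv).1⟩
  have hab : a + b < n := lt_of_le_of_lt (le_max_left _ _) h1
  have hac : a + c < n := lt_of_le_of_lt (le_max_right _ _) h1
  have hmax1 := le_max_left ((b : ℤ) + (c : ℤ) - 1) 0
  have hmax2 := le_max_right ((b : ℤ) + (c : ℤ) - 1) 0
  have hd3 : d + 3 ≤ n := by omega
  have hbcd : 1 ≤ b + c → b + c + d + 2 ≤ n := by intro h; omega
  have hpart : ∀ i : Fin K, i ∈ CA ∨ i ∈ CB ∨ i ∈ CC ∨ i ∈ CD := by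
    intro i
    have hne := hX i
    simp only [hCA, hCB, hCC, hCD, Finset.mem_filter, Finset.mem_univ, true_and,
      Prod.ext_iff]
    by_cases h1u : (X i).1 = u
    · by_cases h2w : (X i).2 = w
      · exact Or.inl (Or.inl ⟨h1u, h2w⟩)
      · exact Or.inr (Or.inl (Or.inl ⟨h1u, fun h => hne (h1u.trans h.symm), h2w⟩))
    · by_cases h1w : (X i).1 = w
      · by_cases h2u : (X i).2 = u
        · exact Or.inl (Or.inr ⟨h1w, h2u⟩)
        · exact Or.inr (Or.inr (Or.inl (Or.inl
            ⟨h1w, h2u, fun h => hne (h1w.trans h.symm)⟩)))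
      · by_cases h2u : (X i).2 = u
        · exact Or.inr (Or.inl (Or.inr ⟨h2u, h1u, h1w⟩))
        · by_cases h2w : (X i).2 = w
          · exact Or.inr (Or.inr (Or.inl (Or.inr ⟨h2w, h1u, h1w⟩)))
          · exact Or.inr (Or.inr (Or.inr ⟨h1u, h1w, h2u, h2w⟩))
  have hnAB : ∀ i, i ∈ CA → i ∉ CB := by
    intro i hi hj
    simp only [hCA, hCB, Finset.mem_filter, Finset.mem_univ, true_and, Prod.ext_iff]
      at hi hj
    rcases hi with ⟨e1, e2⟩ | ⟨e1, e2⟩ <;> rcases hj with ⟨f1, f2, f3⟩ | ⟨f1, f2, f3⟩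
    · exact f3 e2
    · exact huw (f1.symm.trans e2)
    · exact huw (f1.symm.trans e1)
    · exact f3 e1
  have hnAC : ∀ i, i ∈ CA → i ∉ CC := by
    intro i hi hj
    simp only [hCA, hCC, Finset.mem_filter, Finset.mem_univ, true_and, Prod.ext_iff]
      at hi hj
    rcases hi with ⟨e1, e2⟩ | ⟨e1, e2⟩ <;> rcases hj with ⟨f1, f2, f3⟩ | ⟨f1, f2, f3⟩
    · exact huw (e1.symm.trans f1)
    · exact f2 e1
    · exact f2 e2
    · exact f3 e1
  have hnBC : ∀ i, i ∈ CB → i ∉ CC := by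
    intro i hi hj
    simp only [hCB, hCC, Finset.mem_filter, Finset.mem_univ, true_and] at hi hj
    rcases hi with ⟨e1, e2, e3⟩ | ⟨e1, e2, e3⟩ <;>
      rcases hj with ⟨f1, f2, f3⟩ | ⟨f1, f2, f3⟩
    · exact huw (e1.symm.trans f1)
    · exact e3 f1
    · exact e3 f1
    · exact huw (e1.symm.trans f1)
  have hnBD : ∀ i, i ∈ CB → i ∉ CD := by
    intro i hi hj
    simp only [hCB, hCD, Finset.mem_filter, Finset.mem_univ, true_and] at hi hj
    rcases hi with ⟨e1, e2, e3⟩ | ⟨e1, e2, e3⟩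
    · exact hj.1 e1
    · exact hj.2.2.1 e1
  have hnCD : ∀ i, i ∈ CC → i ∉ CD := by
    intro i hi hj
    simp only [hCC, hCD, Finset.mem_filter, Finset.mem_univ, true_and] at hi hj
    rcases hi with ⟨e1, e2, e3⟩ | ⟨e1, e2, e3⟩
    · exact hj.2.1 e1
    · exact hj.2.2.2 e1
  have hclassu : ∀ i, ((X i).1 = u ∨ (X i).2 = u) → i ∈ CA ∪ CB := by
    intro i hi
    rcases hpart i with h | h | h | h
    · exact Finset.mem_union_left _ h
    · exact Finset.mem_union_right _ h
    · exfalso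
      simp only [hCC, Finset.mem_filter, Finset.mem_univ, true_and] at h
      rcases h with ⟨e1, e2, e3⟩ | ⟨e1, e2, e3⟩ <;> rcases hi with h4 | h4
      · exact huw (h4.symm.trans e1)
      · exact e2 h4
      · exact e2 h4
      · exact huw (h4.symm.trans e1)
    · exfalso
      simp only [hCD, Finset.mem_filter, Finset.mem_univ, true_and] at h
      rcases hi with h4 | h4
      · exact h.1 h4
      · exact h.2.2.1 h4
  have hAfacts : ∀ i ∈ CA, ((X i).1 = u ∧ (X i).2 = w) ∨ ((X i).1 = w ∧ (X i).2 = u) := by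
    intro i hi
    simp only [hCA, Finset.mem_filter, Finset.mem_univ, true_and, Prod.ext_iff] at hi
    exact hi
  have hBfacts : ∀ i ∈ CB,
      ((X i).1 = u ∧ (X i).2 ≠ u ∧ (X i).2 ≠ w) ∨
      ((X i).2 = u ∧ (X i).1 ≠ u ∧ (X i).1 ≠ w) := by
    intro i hi
    simp only [hCB, Finset.mem_filter, Finset.mem_univ, true_and] at hi
    exact hi
  have hCfacts : ∀ i ∈ CC,
      ((X i).1 = w ∧ (X i).2 ≠ u ∧ (X i).2 ≠ w) ∨
      ((X i).2 = w ∧ (X i).1 ≠ u ∧ (X i).1 ≠ w) := by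
    intro i hi
    simp only [hCC, Finset.mem_filter, Finset.mem_univ, true_and] at hi
    exact hi
  have hDfacts : ∀ i ∈ CD,
      (X i).1 ≠ u ∧ (X i).1 ≠ w ∧ (X i).2 ≠ u ∧ (X i).2 ≠ w := by
    intro i hi
    simp only [hCD, Finset.mem_filter, Finset.mem_univ, true_and] at hi
    exact hi
  by_cases hBne : CB.Nonempty
  · -- Case 1 : CB nonempty
    obtain ⟨k₀, hk₀⟩ := hBne
    have hb1 : 1 ≤ b := by rw [hb]; exact Finset.card_pos.2 ⟨k₀, hk₀⟩
    obtain ⟨jA, hjA1, hjA2⟩ : ∃ jA : Fin K, (CA.Nonempty → jA ∈ CA) ∧ (CA = ∅ → jA = k₀) := by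
      rcases CA.eq_empty_or_nonempty with h | h
      · exact ⟨k₀, fun hn' => absurd h hn'.ne_empty, fun _ => rfl⟩
      · exact ⟨h.choose, fun _ => h.choose_spec, fun he => absurd he h.ne_empty⟩
    have hk₀f := hBfacts k₀ hk₀
    set τ : V := if (X k₀).1 = u then (X k₀).2 else (X k₀).1 with hτdef
    have hτu : τ ≠ u := by
      rcases hk₀f with ⟨e1, e2, e3⟩ | ⟨e1, e2, e3⟩
      · rw [hτdef, if_pos e1]; exact e2
      · rw [hτdef, if_neg e2]; exact e2
    have hτw : τ ≠ w := by
      rcases hk₀f with ⟨e1, e2, e3⟩ | ⟨e1, e2, e3⟩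
      · rw [hτdef, if_pos e1]; exact e3
      · rw [hτdef, if_neg e2]; exact e3
    have hτZ : τ ∈ ((univ : Finset V).erase u).erase w := hZSmem τ hτu hτw
    set E₁ := ((CA ∪ CB).erase k₀).erase jA with hE₁def
    have hk₀AB : k₀ ∈ CA ∪ CB := Finset.mem_union_right _ hk₀
    have hE₁card : E₁.card + 3 ≤ n := by
      have hU : (CA ∪ CB).card ≤ a + b := by
        rw [ha, hb]; exact Finset.card_union_le _ _
      have he1 : ((CA ∪ CB).erase k₀).card = (CA ∪ CB).card - 1 :=
        Finset.card_erase_of_mem hk₀AB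
      rcases CA.eq_empty_or_nonempty with hAe | hAne
      · have ha0 : a = 0 := by rw [ha, hAe, Finset.card_empty]
        have hle : E₁.card ≤ ((CA ∪ CB).erase k₀).card := by
          rw [hE₁def]; exact Finset.card_erase_le
        have h3' := hbcd (by omega)
        omega
      · have hjAA := hjA1 hAne
        have hjAk : jA ≠ k₀ := fun h => hnAB jA hjAA (h ▸ hk₀)
        have hjAmem : jA ∈ (CA ∪ CB).erase k₀ :=
          Finset.mem_erase.2 ⟨hjAk, Finset.mem_union_left _ hjAA⟩
        have he2 : E₁.card = ((CA ∪ CB).erase k₀).card - 1 := by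
          rw [hE₁def]; exact Finset.card_erase_of_mem hjAmem
        have ha1 : 1 ≤ a := by rw [ha]; exact Finset.card_pos.2 hAne
        omega
    have hgcard : E₁.card ≤ ((((univ : Finset V).erase u).erase w).erase τ).card := by
      rw [Finset.card_erase_of_mem hτZ, hZcard]; omega
    obtain ⟨g, hg1, hg2⟩ := exists_port_fun E₁
      ((((univ : Finset V).erase u).erase w).erase τ) hgcard u
    set p₁ : Fin K → V := fun i => if i = k₀ then τ else if i = jA then w else g i with hp₁def
    have hp₁k₀ : p₁ k₀ = τ := by rw [hp₁def]; simp
    have hp₁g : ∀ i, i ≠ k₀ → i ≠ jA → p₁ i = g i := by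
      intro i h1' h2'; rw [hp₁def]; simp [h1', h2']
    have hp₁jA : jA ≠ k₀ → p₁ jA = w := by
      intro h; rw [hp₁def]; simp [h]
    have hE₁mem : ∀ i, i ∈ CA ∪ CB → i ≠ k₀ → i ≠ jA → i ∈ E₁ := by
      intro i h h1' h2'
      rw [hE₁def]
      exact Finset.mem_erase.2 ⟨h2', Finset.mem_erase.2 ⟨h1', h⟩⟩
    have hX₁A : ∀ i ∈ CA, stepX X u p₁ i = (p₁ i, w) ∨ stepX X u p₁ i = (w, p₁ i) := by
      intro i hi
      rcases hAfacts i hi with ⟨e1, e2⟩ | ⟨e1, e2⟩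
      · left; rw [stepX_eq1 X u p₁ i e1, e2]
      · right; rw [stepX_eq2 X u p₁ i (by rw [e1]; exact hwu) e2, e1]
    have hX₁B : ∀ i ∈ CB, ∃ z : V, z ≠ u ∧ z ≠ w ∧
        (stepX X u p₁ i = (p₁ i, z) ∨ stepX X u p₁ i = (z, p₁ i)) := by
      intro i hi
      rcases hBfacts i hi with ⟨e1, e2, e3⟩ | ⟨e1, e2, e3⟩
      · exact ⟨(X i).2, e2, e3, Or.inl (by rw [stepX_eq1 X u p₁ i e1])⟩
      · exact ⟨(X i).1, e2, e3, Or.inr (by rw [stepX_eq2 X u p₁ i e2 e1])⟩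
    have hX₁D : ∀ i ∈ CD, stepX X u p₁ i = X i := by
      intro i hi
      obtain ⟨e1, e2, e3, e4⟩ := hDfacts i hi
      exact stepX_eq3 X u p₁ i e1 e3
    have hk₀dead : ¬ ((stepX X u p₁ k₀).1 ≠ (stepX X u p₁ k₀).2) := by
      rcases hk₀f with ⟨e1, e2, e3⟩ | ⟨e1, e2, e3⟩
      · rw [stepX_eq1 X u p₁ k₀ e1]
        simp only [ne_eq, not_not]
        show p₁ k₀ = (X k₀).2
        rw [hp₁k₀, hτdef, if_pos e1]
      · rw [stepX_eq2 X u p₁ k₀ e2 e1]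
        simp only [ne_eq, not_not]
        show (X k₀).1 = p₁ k₀
        rw [hp₁k₀, hτdef, if_neg e2]
    have hAsurv : ∀ i ∈ CA, (stepX X u p₁ i).1 ≠ (stepX X u p₁ i).2 →
        i ≠ jA ∧ i ≠ k₀ ∧ p₁ i = g i ∧ i ∈ E₁ := by
      intro i hi hs
      have hik : i ≠ k₀ := fun h => hnAB i hi (h ▸ hk₀)
      have hij : i ≠ jA := by
        intro h
        have hw' : p₁ i = w := by
          rw [h]; exact hp₁jA (h ▸ hik)
        rcases hX₁A i hi with h' | h' <;> rw [h'] at hs <;> simp [hw'] at hs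
      have hiE : i ∈ E₁ := hE₁mem i (Finset.mem_union_left _ hi) hik hij
      exact ⟨hij, hik, hp₁g i hik hij, hiE⟩
    set pool := (((univ : Finset V).erase u).erase w) \ ((CA.erase jA).image g) with hpooldef
    have hpoolsub : pool ⊆ ((univ : Finset V).erase u).erase w := by
      rw [hpooldef]; exact Finset.sdiff_subset
    have hpoolcard : CC.card ≤ pool.card := by
      have himg : ((CA.erase jA).image g).card ≤ (CA.erase jA).card := Finset.card_image_le
      have hsd : (((univ : Finset V).erase u).erase w).card -
          ((CA.erase jA).image g).card ≤ pool.card := by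
        rw [hpooldef]; exact Finset.le_card_sdiff _ _
      rw [hZcard] at hsd
      rw [← hc]
      rcases CA.eq_empty_or_nonempty with hAe | hAne
      · have ha0 : a = 0 := by rw [ha, hAe, Finset.card_empty]
        have hea : (CA.erase jA).card = 0 := by rw [hAe]; simp
        have h3' := hbcd (by omega)
        omega
      · have hjAA := hjA1 hAne
        have hcer : (CA.erase jA).card = CA.card - 1 := Finset.card_erase_of_mem hjAA
        have ha1 : 1 ≤ CA.card := Finset.card_pos.2 hAne
        have haeq : CA.card = a := ha.symm
        omega
    obtain ⟨g₂, hg₂1, hg₂2⟩ := exists_port_fun CC pool hpoolcard u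
    set p₂ : Fin K → V := fun i => if i ∈ CA then p₁ i else g₂ i with hp₂def
    have hp₂A : ∀ i ∈ CA, p₂ i = p₁ i := by intro i hi; rw [hp₂def]; simp [hi]
    have hp₂C : ∀ i ∈ CC, p₂ i = g₂ i := by
      intro i hi
      have hni : i ∉ CA := fun h => hnAC i h hi
      rw [hp₂def]; simp [hni]
    have hwsurv : ∀ i, (stepX X u p₁ i).1 ≠ (stepX X u p₁ i).2 →
        ((stepX X u p₁ i).1 = w ∨ (stepX X u p₁ i).2 = w) → i ∈ CA ∨ i ∈ CC := by
      intro i hs hw'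
      rcases hpart i with h | h | h | h
      · exact Or.inl h
      · exfalso
        obtain ⟨z, hz1, hz2, hz3⟩ := hX₁B i h
        have hpw : p₁ i ≠ w := by
          by_cases hik : i = k₀
          · rw [hik, hp₁k₀]; exact hτw
          · have hij : i ≠ jA := by
              intro hij
              rcases CA.eq_empty_or_nonempty with hAe | hAne
              · exact hik (hij.trans (hjA2 hAe))
              · exact hnAB jA (hjA1 hAne) (hij ▸ h)
            rw [hp₁g i hik hij]
            exact (Finset.mem_erase.1 (Finset.mem_of_mem_erase
              (hg1 i (hE₁mem i (Finset.mem_union_right _ h) hik hij)))).1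
        rcases hz3 with h' | h'
        · rw [h'] at hw'
          rcases hw' with h'' | h''
          · exact hpw h''
          · exact hz2 h''
        · rw [h'] at hw'
          rcases hw' with h'' | h''
          · exact hz2 h''
          · exact hpw h''
      · exact Or.inr h
      · exfalso
        obtain ⟨e1, e2, e3, e4⟩ := hDfacts i h
        rw [hX₁D i h] at hw'
        rcases hw' with h'' | h''
        · exact e2 h''
        · exact e4 h''
    refine auxMain B hcomplete u w huw X hX p₁ p₂ (((CB ∪ CC) ∪ CD).erase k₀)
      ?_ ?_ ?_ ?_ ?_ ?_
    · intro i hi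
      by_cases hik : i = k₀
      · subst hik; rw [hp₁k₀]; exact Finset.mem_erase.2 ⟨hτu, Finset.mem_univ τ⟩
      · by_cases hij : i = jA
        · subst hij
          rw [hp₁jA (fun h => hik h)]  -- jA ≠ k₀ from i ≠ k₀, i = jA
          exact hZw
        · rw [hp₁g i hik hij]
          have hiE := hE₁mem i (hclassu i hi) hik hij
          exact Finset.mem_of_mem_erase (Finset.mem_of_mem_erase (hg1 i hiE))
    · intro i j hi hj hpp
      by_cases hik : i = k₀ <;> by_cases hjk : j = k₀
      · rw [hik, hjk]
      · exfalso
        subst hik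
        rw [hp₁k₀] at hpp
        by_cases hjj : j = jA
        · subst hjj
          rw [hp₁jA hjk] at hpp
          exact hτw hpp
        · rw [hp₁g j hjk hjj] at hpp
          have hjE := hE₁mem j (hclassu j hj) hjk hjj
          exact (Finset.mem_erase.1 (hg1 j hjE)).1 hpp.symm
      · exfalso
        subst hjk
        rw [hp₁k₀] at hpp
        by_cases hii : i = jA
        · subst hii
          rw [hp₁jA hik] at hpp
          exact hτw hpp.symm
        · rw [hp₁g i hik hii] at hpp
          have hiE := hE₁mem i (hclassu i hi) hik hii
          exact (Finset.mem_erase.1 (hg1 i hiE)).1 hpp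
      · by_cases hii : i = jA <;> by_cases hjj : j = jA
        · rw [hii, hjj]
        · exfalso
          subst hii
          rw [hp₁jA hik] at hpp
          rw [hp₁g j hjk hjj] at hpp
          have hjE := hE₁mem j (hclassu j hj) hjk hjj
          exact (Finset.mem_erase.1 (Finset.mem_of_mem_erase (hg1 j hjE))).1 hpp.symm
        · exfalso
          subst hjj
          rw [hp₁jA hjk] at hpp
          rw [hp₁g i hik hii] at hpp
          exact (Finset.mem_erase.1 (Finset.mem_of_mem_erase
            (hg1 i (hE₁mem i (hclassu i hi) hik hii)))).1 hpp
        · have hiE := hE₁mem i (hclassu i hi) hik hii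
          have hjE := hE₁mem j (hclassu j hj) hjk hjj
          apply hg2 i hiE j hjE
          rw [← hp₁g i hik hii, ← hp₁g j hjk hjj]
          exact hpp
    · intro i hs hw'
      rcases hwsurv i hs hw' with h | h
      · obtain ⟨hij, hik, hpg, hiE⟩ := hAsurv i h hs
        rw [hp₂A i h, hpg]
        exact Finset.mem_of_mem_erase (hg1 i hiE)
      · rw [hp₂C i h]
        exact hpoolsub (hg₂1 i h)
    · intro i j hsi hwi hsj hwj hpp
      rcases hwsurv i hsi hwi with hi' | hi' <;> rcases hwsurv j hsj hwj with hj' | hj'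
      · obtain ⟨_, _, hpgi, hiE⟩ := hAsurv i hi' hsi
        obtain ⟨_, _, hpgj, hjE⟩ := hAsurv j hj' hsj
        rw [hp₂A i hi', hp₂A j hj', hpgi, hpgj] at hpp
        exact hg2 i hiE j hjE hpp
      · exfalso
        obtain ⟨hij, hik, hpgi, hiE⟩ := hAsurv i hi' hsi
        rw [hp₂A i hi', hpgi, hp₂C j hj'] at hpp
        have hgj : g₂ j ∈ pool := hg₂1 j hj'
        rw [hpooldef] at hgj
        have hmem : g i ∈ (CA.erase jA).image g :=
          Finset.mem_image.2 ⟨i, Finset.mem_erase.2 ⟨hij, hi'⟩, rfl⟩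
        exact (Finset.mem_sdiff.1 hgj).2 (hpp ▸ hmem)
      · exfalso
        obtain ⟨hij, hjk, hpgj, hjE⟩ := hAsurv j hj' hsj
        rw [hp₂A j hj', hpgj, hp₂C i hi'] at hpp
        have hgi : g₂ i ∈ pool := hg₂1 i hi'
        rw [hpooldef] at hgi
        have hmem : g j ∈ (CA.erase jA).image g :=
          Finset.mem_image.2 ⟨j, Finset.mem_erase.2 ⟨hij, hj'⟩, rfl⟩
        exact (Finset.mem_sdiff.1 hgi).2 (hpp.symm ▸ hmem)
      · rw [hp₂C i hi', hp₂C j hj'] at hpp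
        exact hg₂2 i hi' j hj' hpp
    · intro i hs1 hs2
      rcases hpart i with h | h | h | h
      · exfalso
        obtain ⟨hij, hik, hpg, hiE⟩ := hAsurv i h hs1
        have hgiw : g i ≠ w :=
          (Finset.mem_erase.1 (Finset.mem_of_mem_erase (hg1 i hiE))).1
        rcases hX₁A i h with h' | h'
        · apply hs2
          rw [stepX_eq2 (stepX X u p₁) w p₂ i
            (by rw [h']; show p₁ i ≠ w; rw [hpg]; exact hgiw) (by rw [h'])]
          show (stepX X u p₁ i).1 = p₂ i
          rw [h', hp₂A i h]
        · apply hs2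
          rw [stepX_eq1 (stepX X u p₁) w p₂ i (by rw [h'])]
          show p₂ i = (stepX X u p₁ i).2
          rw [hp₂A i h, h']
      · by_cases hik : i = k₀
        · subst hik; exact absurd hs1 hk₀dead
        · exact Finset.mem_erase.2 ⟨hik,
            Finset.mem_union_left _ (Finset.mem_union_left _ h)⟩
      · have hik : i ≠ k₀ := fun h' => hnBC k₀ hk₀ (h' ▸ h)
        exact Finset.mem_erase.2 ⟨hik,
          Finset.mem_union_left _ (Finset.mem_union_right _ h)⟩
      · have hik : i ≠ k₀ := fun h' => hnBD k₀ hk₀ (h' ▸ h)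
        exact Finset.mem_erase.2 ⟨hik, Finset.mem_union_right _ h⟩
    · have h1' : ((CB ∪ CC) ∪ CD).card ≤ b + c + d := by
        calc ((CB ∪ CC) ∪ CD).card ≤ (CB ∪ CC).card + CD.card := Finset.card_union_le _ _
          _ ≤ CB.card + CC.card + CD.card := by
              have := Finset.card_union_le CB CC; omega
          _ = b + c + d := by rw [hb, hc, hd]
      have hk₀T : k₀ ∈ (CB ∪ CC) ∪ CD :=
        Finset.mem_union_left _ (Finset.mem_union_left _ hk₀)
      have h2' := Finset.card_erase_of_mem hk₀T
      have h3' := hbcd (by omega)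
      rw [hZcard]
      omega
  · by_cases hCne : CC.Nonempty
    · -- Case 2 : CB empty, CC nonempty
      have hBe : CB = ∅ := Finset.not_nonempty_iff_eq_empty.1 hBne
      have hb0 : b = 0 := by rw [hb, hBe, Finset.card_empty]
      obtain ⟨k₀, hk₀⟩ := hCne
      have hc1 : 1 ≤ c := by rw [hc]; exact Finset.card_pos.2 ⟨k₀, hk₀⟩
      obtain ⟨jA, hjA1, hjA2⟩ : ∃ jA : Fin K, (CA.Nonempty → jA ∈ CA) ∧ (CA = ∅ → jA = k₀) := by
        rcases CA.eq_empty_or_nonempty with h | h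
        · exact ⟨k₀, fun hn' => absurd h hn'.ne_empty, fun _ => rfl⟩
        · exact ⟨h.choose, fun _ => h.choose_spec, fun he => absurd he h.ne_empty⟩
      have hk₀f := hCfacts k₀ hk₀
      set τ : V := if (X k₀).1 = w then (X k₀).2 else (X k₀).1 with hτdef
      have hτu : τ ≠ u := by
        rcases hk₀f with ⟨e1, e2, e3⟩ | ⟨e1, e2, e3⟩
        · rw [hτdef, if_pos e1]; exact e2
        · rw [hτdef, if_neg e3]; exact e2
      have hτw : τ ≠ w := by
        rcases hk₀f with ⟨e1, e2, e3⟩ | ⟨e1, e2, e3⟩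
        · rw [hτdef, if_pos e1]; exact e3
        · rw [hτdef, if_neg e3]; exact e3
      have hτZ : τ ∈ ((univ : Finset V).erase u).erase w := hZSmem τ hτu hτw
      have hclassu2 : ∀ i, ((X i).1 = u ∨ (X i).2 = u) → i ∈ CA := by
        intro i hi
        rcases Finset.mem_union.1 (hclassu i hi) with h | h
        · exact h
        · rw [hBe] at h; exact absurd h (Finset.notMem_empty i)
      have hE₁card : (CA.erase jA).card ≤ ((((univ : Finset V).erase u).erase w).erase τ).card := by
        rw [Finset.card_erase_of_mem hτZ, hZcard]
        rcases CA.eq_empty_or_nonempty with hAe | hAne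
        · rw [hAe]; simp
        · have hjAA := hjA1 hAne
          have hcer : (CA.erase jA).card = CA.card - 1 := Finset.card_erase_of_mem hjAA
          have ha1 : 1 ≤ CA.card := Finset.card_pos.2 hAne
          have haeq : CA.card = a := ha.symm
          omega
      obtain ⟨g, hg1, hg2⟩ := exists_port_fun (CA.erase jA)
        ((((univ : Finset V).erase u).erase w).erase τ) hE₁card u
      set p₁ : Fin K → V := fun i => if i = jA then w else g i with hp₁def
      have hp₁jA : p₁ jA = w := by rw [hp₁def]; simp
      have hp₁g : ∀ i, i ≠ jA → p₁ i = g i := by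
        intro i h1'; rw [hp₁def]; simp [h1']
      have hX₁A : ∀ i ∈ CA, stepX X u p₁ i = (p₁ i, w) ∨ stepX X u p₁ i = (w, p₁ i) := by
        intro i hi
        rcases hAfacts i hi with ⟨e1, e2⟩ | ⟨e1, e2⟩
        · left; rw [stepX_eq1 X u p₁ i e1, e2]
        · right; rw [stepX_eq2 X u p₁ i (by rw [e1]; exact hwu) e2, e1]
      have hX₁C : ∀ i ∈ CC, stepX X u p₁ i = X i := by
        intro i hi
        rcases hCfacts i hi with ⟨e1, e2, e3⟩ | ⟨e1, e2, e3⟩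
        · exact stepX_eq3 X u p₁ i (by rw [e1]; exact hwu) e2
        · exact stepX_eq3 X u p₁ i e2 (by rw [e1]; exact hwu)
      have hX₁D : ∀ i ∈ CD, stepX X u p₁ i = X i := by
        intro i hi
        obtain ⟨e1, e2, e3, e4⟩ := hDfacts i hi
        exact stepX_eq3 X u p₁ i e1 e3
      have hAsurv : ∀ i ∈ CA, (stepX X u p₁ i).1 ≠ (stepX X u p₁ i).2 →
          i ≠ jA ∧ p₁ i = g i ∧ i ∈ CA.erase jA := by
        intro i hi hs
        have hij : i ≠ jA := by
          intro h
          have hw' : p₁ i = w := by rw [h]; exact hp₁jA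
          rcases hX₁A i hi with h' | h' <;> rw [h'] at hs <;> simp [hw'] at hs
        exact ⟨hij, hp₁g i hij, Finset.mem_erase.2 ⟨hij, hi⟩⟩
      set pool := ((((univ : Finset V).erase u).erase w).erase τ) \
        ((CA.erase jA).image g) with hpooldef
      have hpoolsub : pool ⊆ ((univ : Finset V).erase u).erase w := by
        intro v hv
        rw [hpooldef] at hv
        exact Finset.mem_of_mem_erase (Finset.mem_sdiff.1 hv).1
      have hpoolτ : ∀ v ∈ pool, v ≠ τ := by
        intro v hv
        rw [hpooldef] at hv
        exact (Finset.mem_erase.1 (Finset.mem_sdiff.1 hv).1).1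
      have hpoolcard : (CC.erase k₀).card ≤ pool.card := by
        have hsd : ((((univ : Finset V).erase u).erase w).erase τ).card -
            ((CA.erase jA).image g).card ≤ pool.card := by
          rw [hpooldef]; exact Finset.le_card_sdiff _ _
        rw [Finset.card_erase_of_mem hτZ, hZcard] at hsd
        have himg : ((CA.erase jA).image g).card ≤ (CA.erase jA).card := Finset.card_image_le
        have hck : (CC.erase k₀).card = CC.card - 1 := Finset.card_erase_of_mem hk₀
        have hceq : CC.card = c := hc.symm
        rcases CA.eq_empty_or_nonempty with hAe | hAne
        · have ha0 : a = 0 := by rw [ha, hAe, Finset.card_empty]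
          have hea : (CA.erase jA).card = 0 := by rw [hAe]; simp
          have h3' := hbcd (by omega)
          omega
        · have hjAA := hjA1 hAne
          have hcer : (CA.erase jA).card = CA.card - 1 := Finset.card_erase_of_mem hjAA
          have ha1 : 1 ≤ CA.card := Finset.card_pos.2 hAne
          have haeq : CA.card = a := ha.symm
          omega
      obtain ⟨g₂, hg₂1, hg₂2⟩ := exists_port_fun (CC.erase k₀) pool hpoolcard u
      have hk₀A : k₀ ∉ CA := fun h => hnAC k₀ h hk₀
      set p₂ : Fin K → V := fun i => if i ∈ CA then p₁ i else if i = k₀ then τ else g₂ i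
        with hp₂def
      have hp₂A : ∀ i ∈ CA, p₂ i = p₁ i := by intro i hi; rw [hp₂def]; simp [hi]
      have hp₂k₀ : p₂ k₀ = τ := by rw [hp₂def]; simp [hk₀A]
      have hp₂C : ∀ i ∈ CC, i ≠ k₀ → p₂ i = g₂ i := by
        intro i hi hik
        have hni : i ∉ CA := fun h => hnAC i h hi
        rw [hp₂def]; simp [hni, hik]
      have hk₀dead2 : ¬ ((stepX (stepX X u p₁) w p₂ k₀).1 ≠
          (stepX (stepX X u p₁) w p₂ k₀).2) := by
        simp only [ne_eq, not_not]
        rcases hk₀f with ⟨e1, e2, e3⟩ | ⟨e1, e2, e3⟩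
        · rw [stepX_eq1 (stepX X u p₁) w p₂ k₀ (by rw [hX₁C k₀ hk₀]; exact e1)]
          show p₂ k₀ = (stepX X u p₁ k₀).2
          rw [hp₂k₀, hX₁C k₀ hk₀, hτdef, if_pos e1]
        · rw [stepX_eq2 (stepX X u p₁) w p₂ k₀
            (by rw [hX₁C k₀ hk₀]; exact e3) (by rw [hX₁C k₀ hk₀]; exact e1)]
          show (stepX X u p₁ k₀).1 = p₂ k₀
          rw [hp₂k₀, hτdef, if_neg e3, hX₁C k₀ hk₀]
      have hwsurv : ∀ i, (stepX X u p₁ i).1 ≠ (stepX X u p₁ i).2 →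
          ((stepX X u p₁ i).1 = w ∨ (stepX X u p₁ i).2 = w) → i ∈ CA ∨ i ∈ CC := by
        intro i hs hw'
        rcases hpart i with h | h | h | h
        · exact Or.inl h
        · rw [hBe] at h; exact absurd h (Finset.notMem_empty i)
        · exact Or.inr h
        · exfalso
          obtain ⟨e1, e2, e3, e4⟩ := hDfacts i h
          rw [hX₁D i h] at hw'
          rcases hw' with h'' | h''
          · exact e2 h''
          · exact e4 h''
      refine auxMain B hcomplete u w huw X hX p₁ p₂ ((CC ∪ CD).erase k₀)
        ?_ ?_ ?_ ?_ ?_ ?_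
      · intro i hi
        by_cases hij : i = jA
        · subst hij; rw [hp₁jA]; exact hZw
        · rw [hp₁g i hij]
          have hiE : i ∈ CA.erase jA := Finset.mem_erase.2 ⟨hij, hclassu2 i hi⟩
          exact Finset.mem_of_mem_erase (Finset.mem_of_mem_erase (hg1 i hiE))
      · intro i j hi hj hpp
        by_cases hii : i = jA <;> by_cases hjj : j = jA
        · rw [hii, hjj]
        · exfalso
          rw [hii, hp₁jA, hp₁g j hjj] at hpp
          have hjE : j ∈ CA.erase jA := Finset.mem_erase.2 ⟨hjj, hclassu2 j hj⟩
          exact (Finset.mem_erase.1 (Finset.mem_of_mem_erase (hg1 j hjE))).1 hpp.symm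
        · exfalso
          rw [hjj, hp₁jA, hp₁g i hii] at hpp
          have hiE : i ∈ CA.erase jA := Finset.mem_erase.2 ⟨hii, hclassu2 i hi⟩
          exact (Finset.mem_erase.1 (Finset.mem_of_mem_erase (hg1 i hiE))).1 hpp
        · have hiE : i ∈ CA.erase jA := Finset.mem_erase.2 ⟨hii, hclassu2 i hi⟩
          have hjE : j ∈ CA.erase jA := Finset.mem_erase.2 ⟨hjj, hclassu2 j hj⟩
          apply hg2 i hiE j hjE
          rw [← hp₁g i hii, ← hp₁g j hjj]
          exact hpp
      · intro i hs hw'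
        rcases hwsurv i hs hw' with h | h
        · obtain ⟨hij, hpg, hiE⟩ := hAsurv i h hs
          rw [hp₂A i h, hpg]
          exact Finset.mem_of_mem_erase (hg1 i hiE)
        · by_cases hik : i = k₀
          · subst hik; rw [hp₂k₀]; exact hτZ
          · rw [hp₂C i h hik]
            exact hpoolsub (hg₂1 i (Finset.mem_erase.2 ⟨hik, h⟩))
      · intro i j hsi hwi hsj hwj hpp
        rcases hwsurv i hsi hwi with hi' | hi' <;> rcases hwsurv j hsj hwj with hj' | hj'
        · obtain ⟨_, hpgi, hiE⟩ := hAsurv i hi' hsi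
          obtain ⟨_, hpgj, hjE⟩ := hAsurv j hj' hsj
          rw [hp₂A i hi', hp₂A j hj', hpgi, hpgj] at hpp
          exact hg2 i hiE j hjE hpp
        · exfalso
          obtain ⟨hij, hpgi, hiE⟩ := hAsurv i hi' hsi
          rw [hp₂A i hi', hpgi] at hpp
          by_cases hjk : j = k₀
          · subst hjk
            rw [hp₂k₀] at hpp
            exact (Finset.mem_erase.1 (hg1 i hiE)).1 hpp
          · rw [hp₂C j hj' hjk] at hpp
            have hgj : g₂ j ∈ pool := hg₂1 j (Finset.mem_erase.2 ⟨hjk, hj'⟩)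
            rw [hpooldef] at hgj
            have hmem : g i ∈ (CA.erase jA).image g :=
              Finset.mem_image.2 ⟨i, hiE, rfl⟩
            exact (Finset.mem_sdiff.1 hgj).2 (hpp ▸ hmem)
        · exfalso
          obtain ⟨hij, hpgj, hjE⟩ := hAsurv j hj' hsj
          rw [hp₂A j hj', hpgj] at hpp
          by_cases hik : i = k₀
          · subst hik
            rw [hp₂k₀] at hpp
            exact (Finset.mem_erase.1 (hg1 j hjE)).1 hpp.symm
          · rw [hp₂C i hi' hik] at hpp
            have hgi : g₂ i ∈ pool := hg₂1 i (Finset.mem_erase.2 ⟨hik, hi'⟩)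
            rw [hpooldef] at hgi
            have hmem : g j ∈ (CA.erase jA).image g :=
              Finset.mem_image.2 ⟨j, hjE, rfl⟩
            exact (Finset.mem_sdiff.1 hgi).2 (hpp.symm ▸ hmem)
        · by_cases hik : i = k₀ <;> by_cases hjk : j = k₀
          · rw [hik, hjk]
          · exfalso
            subst hik
            rw [hp₂k₀, hp₂C j hj' hjk] at hpp
            exact hpoolτ _ (hg₂1 j (Finset.mem_erase.2 ⟨hjk, hj'⟩)) hpp.symm
          · exfalso
            subst hjk
            rw [hp₂k₀, hp₂C i hi' hik] at hpp
            exact hpoolτ _ (hg₂1 i (Finset.mem_erase.2 ⟨hik, hi'⟩)) hpp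
          · rw [hp₂C i hi' hik, hp₂C j hj' hjk] at hpp
            exact hg₂2 i (Finset.mem_erase.2 ⟨hik, hi'⟩) j
              (Finset.mem_erase.2 ⟨hjk, hj'⟩) hpp
      · intro i hs1 hs2
        rcases hpart i with h | h | h | h
        · exfalso
          obtain ⟨hij, hpg, hiE⟩ := hAsurv i h hs1
          have hgiw : g i ≠ w :=
            (Finset.mem_erase.1 (Finset.mem_of_mem_erase (hg1 i hiE))).1
          rcases hX₁A i h with h' | h'
          · apply hs2
            rw [stepX_eq2 (stepX X u p₁) w p₂ i
              (by rw [h']; show p₁ i ≠ w; rw [hpg]; exact hgiw) (by rw [h'])]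
            show (stepX X u p₁ i).1 = p₂ i
            rw [h', hp₂A i h]
          · apply hs2
            rw [stepX_eq1 (stepX X u p₁) w p₂ i (by rw [h'])]
            show p₂ i = (stepX X u p₁ i).2
            rw [hp₂A i h, h']
        · rw [hBe] at h; exact absurd h (Finset.notMem_empty i)
        · by_cases hik : i = k₀
          · subst hik; exact absurd hs2 hk₀dead2
          · exact Finset.mem_erase.2 ⟨hik, Finset.mem_union_left _ h⟩
        · have hik : i ≠ k₀ := fun h' => hnCD k₀ hk₀ (h' ▸ h)
          exact Finset.mem_erase.2 ⟨hik, Finset.mem_union_right _ h⟩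
      · have h1' : (CC ∪ CD).card ≤ c + d := by
          have := Finset.card_union_le CC CD
          rw [hc, hd]; omega
        have hk₀T : k₀ ∈ CC ∪ CD := Finset.mem_union_left _ hk₀
        have h2' := Finset.card_erase_of_mem hk₀T
        have h3' := hbcd (by omega)
        rw [hZcard]
        omega
    · -- Case 3 : CB and CC empty
      have hBe : CB = ∅ := Finset.not_nonempty_iff_eq_empty.1 hBne
      have hCe : CC = ∅ := Finset.not_nonempty_iff_eq_empty.1 hCne
      obtain ⟨jA, hjA1⟩ : ∃ jA : Fin K, (CA.Nonempty → jA ∈ CA) := by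
        rcases CA.eq_empty_or_nonempty with h | h
        · exact ⟨⟨0, hKpos⟩, fun hn' => absurd h hn'.ne_empty⟩
        · exact ⟨h.choose, fun _ => h.choose_spec⟩
      have hclassu2 : ∀ i, ((X i).1 = u ∨ (X i).2 = u) → i ∈ CA := by
        intro i hi
        rcases Finset.mem_union.1 (hclassu i hi) with h | h
        · exact h
        · rw [hBe] at h; exact absurd h (Finset.notMem_empty i)
      have hE₁card : (CA.erase jA).card ≤ (((univ : Finset V).erase u).erase w).card := by
        rw [hZcard]
        rcases CA.eq_empty_or_nonempty with hAe | hAne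
        · rw [hAe]; simp
        · have hjAA := hjA1 hAne
          have hcer : (CA.erase jA).card = CA.card - 1 := Finset.card_erase_of_mem hjAA
          have ha1 : 1 ≤ CA.card := Finset.card_pos.2 hAne
          have haeq : CA.card = a := ha.symm
          omega
      obtain ⟨g, hg1, hg2⟩ := exists_port_fun (CA.erase jA)
        (((univ : Finset V).erase u).erase w) hE₁card u
      set p₁ : Fin K → V := fun i => if i = jA then w else g i with hp₁def
      have hp₁jA : p₁ jA = w := by rw [hp₁def]; simp
      have hp₁g : ∀ i, i ≠ jA → p₁ i = g i := by
        intro i h1'; rw [hp₁def]; simp [h1']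
      have hX₁A : ∀ i ∈ CA, stepX X u p₁ i = (p₁ i, w) ∨ stepX X u p₁ i = (w, p₁ i) := by
        intro i hi
        rcases hAfacts i hi with ⟨e1, e2⟩ | ⟨e1, e2⟩
        · left; rw [stepX_eq1 X u p₁ i e1, e2]
        · right; rw [stepX_eq2 X u p₁ i (by rw [e1]; exact hwu) e2, e1]
      have hX₁D : ∀ i ∈ CD, stepX X u p₁ i = X i := by
        intro i hi
        obtain ⟨e1, e2, e3, e4⟩ := hDfacts i hi
        exact stepX_eq3 X u p₁ i e1 e3
      have hAsurv : ∀ i ∈ CA, (stepX X u p₁ i).1 ≠ (stepX X u p₁ i).2 →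
          i ≠ jA ∧ p₁ i = g i ∧ i ∈ CA.erase jA := by
        intro i hi hs
        have hij : i ≠ jA := by
          intro h
          have hw' : p₁ i = w := by rw [h]; exact hp₁jA
          rcases hX₁A i hi with h' | h' <;> rw [h'] at hs <;> simp [hw'] at hs
        exact ⟨hij, hp₁g i hij, Finset.mem_erase.2 ⟨hij, hi⟩⟩
      set p₂ : Fin K → V := fun i => if i ∈ CA then p₁ i else u with hp₂def
      have hp₂A : ∀ i ∈ CA, p₂ i = p₁ i := by intro i hi; rw [hp₂def]; simp [hi]
      have hwsurv : ∀ i, (stepX X u p₁ i).1 ≠ (stepX X u p₁ i).2 →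
          ((stepX X u p₁ i).1 = w ∨ (stepX X u p₁ i).2 = w) → i ∈ CA := by
        intro i hs hw'
        rcases hpart i with h | h | h | h
        · exact h
        · rw [hBe] at h; exact absurd h (Finset.notMem_empty i)
        · rw [hCe] at h; exact absurd h (Finset.notMem_empty i)
        · exfalso
          obtain ⟨e1, e2, e3, e4⟩ := hDfacts i h
          rw [hX₁D i h] at hw'
          rcases hw' with h'' | h''
          · exact e2 h''
          · exact e4 h''
      refine auxMain B hcomplete u w huw X hX p₁ p₂ CD ?_ ?_ ?_ ?_ ?_ ?_
      · intro i hi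
        by_cases hij : i = jA
        · subst hij; rw [hp₁jA]; exact hZw
        · rw [hp₁g i hij]
          have hiE : i ∈ CA.erase jA := Finset.mem_erase.2 ⟨hij, hclassu2 i hi⟩
          exact Finset.mem_of_mem_erase (hg1 i hiE)
      · intro i j hi hj hpp
        by_cases hii : i = jA <;> by_cases hjj : j = jA
        · rw [hii, hjj]
        · exfalso
          rw [hii, hp₁jA, hp₁g j hjj] at hpp
          have hjE : j ∈ CA.erase jA := Finset.mem_erase.2 ⟨hjj, hclassu2 j hj⟩
          exact (Finset.mem_erase.1 (hg1 j hjE)).1 hpp.symm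
        · exfalso
          rw [hjj, hp₁jA, hp₁g i hii] at hpp
          have hiE : i ∈ CA.erase jA := Finset.mem_erase.2 ⟨hii, hclassu2 i hi⟩
          exact (Finset.mem_erase.1 (hg1 i hiE)).1 hpp
        · have hiE : i ∈ CA.erase jA := Finset.mem_erase.2 ⟨hii, hclassu2 i hi⟩
          have hjE : j ∈ CA.erase jA := Finset.mem_erase.2 ⟨hjj, hclassu2 j hj⟩
          apply hg2 i hiE j hjE
          rw [← hp₁g i hii, ← hp₁g j hjj]
          exact hpp
      · intro i hs hw'
        have h := hwsurv i hs hw'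
        obtain ⟨hij, hpg, hiE⟩ := hAsurv i h hs
        rw [hp₂A i h, hpg]
        exact hg1 i hiE
      · intro i j hsi hwi hsj hwj hpp
        have hi' := hwsurv i hsi hwi
        have hj' := hwsurv j hsj hwj
        obtain ⟨_, hpgi, hiE⟩ := hAsurv i hi' hsi
        obtain ⟨_, hpgj, hjE⟩ := hAsurv j hj' hsj
        rw [hp₂A i hi', hp₂A j hj', hpgi, hpgj] at hpp
        exact hg2 i hiE j hjE hpp
      · intro i hs1 hs2
        rcases hpart i with h | h | h | h
        · exfalso
          obtain ⟨hij, hpg, hiE⟩ := hAsurv i h hs1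
          have hgiw : g i ≠ w := (Finset.mem_erase.1 (hg1 i hiE)).1
          rcases hX₁A i h with h' | h'
          · apply hs2
            rw [stepX_eq2 (stepX X u p₁) w p₂ i
              (by rw [h']; show p₁ i ≠ w; rw [hpg]; exact hgiw) (by rw [h'])]
            show (stepX X u p₁ i).1 = p₂ i
            rw [h', hp₂A i h]
          · apply hs2
            rw [stepX_eq1 (stepX X u p₁) w p₂ i (by rw [h'])]
            show p₂ i = (stepX X u p₁ i).2
            rw [hp₂A i h, h']
        · rw [hBe] at h; exact absurd h (Finset.notMem_empty i)
        · rw [hCe] at h; exact absurd h (Finset.notMem_empty i)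
        · exact h
      · rw [hZcard, ← hd]
        omega
end

section
/- Let B be a complete graph on n vertices and let u, w be two distinct vertices of B. Let 𝒳_B be a multiset of pairs of distinct vertices of B, and let a be the number of occurrences in 𝒳_B of the pair {u,w}, b the number of occurrences of pairs {u,x} with x ∉ {u,w}, and c the number of occurrences of pairs {w,x} with x ∉ {u,w}. If n ≤ max{a+b, a+c}, then (B, 𝒳_B, |𝒳_B|) is a No-instance of EDP, i.e., there is no family of |𝒳_B| pairwise edge-disjoint paths connecting the terminal pairs of 𝒳_B. -/
open SimpleGraph Finset

namespace SimpleGraph.Walk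

variable {V : Type*} {G : SimpleGraph V} {x y : V}

lemma exists_mem_edges_mem_of_ne (p : G.Walk x y) (h : x ≠ y) {u : V} (hu : x = u ∨ y = u) :
    ∃ e ∈ p.edges, u ∈ e := by
  have hnil : ¬p.Nil := not_nil_of_ne h
  rcases hu with rfl | rfl
  · exact ⟨_, p.mk_start_snd_mem_edges hnil, Sym2.mem_mk_left _ _⟩
  · exact ⟨_, p.mk_penultimate_end_mem_edges hnil, Sym2.mem_mk_right _ _⟩

end SimpleGraph.Walk

namespace PairwiseEdgeDisjoint

variable {V ι : Type*} [DecidableEq V] {G : SimpleGraph V} {X : ι → V × V}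
  {P : WalkFamily G X}

lemma card_le_degree (hP : PairwiseEdgeDisjoint G X P) (u : V) [Fintype (G.neighborSet u)]
    {s : Finset ι} (hs : ∀ i ∈ s, (X i).1 ≠ (X i).2 ∧ ((X i).1 = u ∨ (X i).2 = u)) :
    #s ≤ G.degree u := by
  have hedge : ∀ i ∈ s, ∃ e ∈ (P i).edges, u ∈ e := fun i hi =>
    (P i).exists_mem_edges_mem_of_ne (hs i hi).1 (hs i hi).2
  have : Nonempty (Sym2 V) := ⟨s(u, u)⟩
  choose! f hf_edges hf_mem using hedge
  rw [← card_incidenceFinset_eq_degree]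
  refine card_le_card_of_injOn f (fun i hi => ?_) (fun i hi j hj hij => ?_)
  · rw [coe_incidenceFinset]
    exact ⟨(P i).edges_subset_edgeSet (hf_edges i hi), hf_mem i hi⟩
  · by_contra hne
    exact hP i j hne _ (hf_edges i hi) (hij ▸ hf_edges j hj)

lemma card_pair_add_card_star_lt [Fintype V] [Fintype ι] (hP : PairwiseEdgeDisjoint G X P)
    (hX : ∀ i, (X i).1 ≠ (X i).2) (u w : V) :
    #{i | X i = (u, w) ∨ X i = (w, u)} +
      #{i | ((X i).1 = u ∧ (X i).2 ≠ u ∧ (X i).2 ≠ w) ∨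
        ((X i).2 = u ∧ (X i).1 ≠ u ∧ (X i).1 ≠ w)} < Fintype.card V := by
  classical
  rw [← card_union_of_disjoint]
  · refine (hP.card_le_degree u fun i hi => ⟨hX i, ?_⟩).trans_lt (G.degree_lt_card_verts u)
    simp only [mem_union, mem_filter, mem_univ, true_and, Prod.ext_iff] at hi
    tauto
  · simp only [Finset.disjoint_left, mem_filter, mem_univ, true_and, Prod.ext_iff]
    tauto

end PairwiseEdgeDisjoint

theorem edp_clique_path_block_no_general {V : Type*} [Fintype V] [DecidableEq V]
    (B : SimpleGraph V)
    (u w : V)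
    {K : ℕ} (X : Fin K → V × V) (hX : ∀ i, (X i).1 ≠ (X i).2)
    (a b c : ℕ)
    (ha : a = (Finset.univ.filter (fun i : Fin K => X i = (u, w) ∨ X i = (w, u))).card)
    (hb : b = (Finset.univ.filter (fun i : Fin K =>
      ((X i).1 = u ∧ (X i).2 ≠ u ∧ (X i).2 ≠ w) ∨
      ((X i).2 = u ∧ (X i).1 ≠ u ∧ (X i).1 ≠ w))).card)
    (hc : c = (Finset.univ.filter (fun i : Fin K =>
      ((X i).1 = w ∧ (X i).2 ≠ u ∧ (X i).2 ≠ w) ∨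
      ((X i).2 = w ∧ (X i).1 ≠ u ∧ (X i).1 ≠ w))).card)
    (hle : Fintype.card V ≤ max (a + b) (a + c)) :
    ¬ EDPYes B X := by
  rintro ⟨P, -, hP⟩
  subst ha hb hc
  rcases le_max_iff.mp hle with hle | hle
  · exact (hP.card_pair_add_card_star_lt hX u w).not_ge hle
  · refine (hP.card_pair_add_card_star_lt hX w u).not_ge (hle.trans_eq ?_)
    congr 2 <;> ext i <;> simp only [mem_filter, mem_univ, true_and] <;> tauto

/-- On a complete graph `B` with distinguished distinct vertices `u, w`,
with `a, b, c` counting the occurrences of terminal pairs of the corresponding types, if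
`n ≤ max (a+b) (a+c)`, then the instance is a No-instance of EDP. -/
theorem edp_clique_path_block_no {V : Type*} [Fintype V] [DecidableEq V]
    (B : SimpleGraph V) (hcomplete : ∀ x y : V, x ≠ y → B.Adj x y)
    (u w : V) (huw : u ≠ w)
    {K : ℕ} (X : Fin K → V × V) (hX : ∀ i, (X i).1 ≠ (X i).2)
    (a b c : ℕ)
    (ha : a = (Finset.univ.filter (fun i : Fin K => X i = (u, w) ∨ X i = (w, u))).card)
    (hb : b = (Finset.univ.filter (fun i : Fin K =>
      ((X i).1 = u ∧ (X i).2 ≠ u ∧ (X i).2 ≠ w) ∨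
      ((X i).2 = u ∧ (X i).1 ≠ u ∧ (X i).1 ≠ w))).card)
    (hc : c = (Finset.univ.filter (fun i : Fin K =>
      ((X i).1 = w ∧ (X i).2 ≠ u ∧ (X i).2 ≠ w) ∨
      ((X i).2 = w ∧ (X i).1 ≠ u ∧ (X i).1 ≠ w))).card)
    (hle : Fintype.card V ≤ max (a + b) (a + c)) :
    ¬ EDPYes B X :=
  edp_clique_path_block_no_general B u w X hX a b c ha hb hc hle
end

section
/- Let (G,𝒳,k) be a VDP instance where G is a split graph with split partition (C, I) such that (i) every vertex of I appears in some terminal pair of 𝒳, (ii) for every terminal pair (s,t) ∈ 𝒳 with exactly one endpoint in C and the other in I, st ∉ E(G), and (iii) no terminal pair with both endpoints in C occurs more than once in 𝒳. Suppose a vertex v ∈ V(G) belongs to x ≥ 2 occurrences of terminal pairs (v,a_1), …, (v,a_x) in 𝒳. Let G' be obtained from G by deleting v and adding x new vertices v_1, …, v_x, each adjacent to every vertex of N_G(v), where additionally v_1, …, v_x are made pairwise adjacent if v ∈ C; and let 𝒳' be obtained from 𝒳 by replacing the occurrences (v,a_1), …, (v,a_x) with (v_1,a_1), …, (v_x,a_x).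 Then (G, 𝒳, k) is a Yes-instance of VDP if and only if (G', 𝒳', k) is a Yes-instance of VDP. -/
open SimpleGraph Finset

/-- The graph obtained from `G` by deleting the vertex `v` (here: isolating it) and adding
`x` copies of `v`, each adjacent to every neighbor of `v` in `G`, the copies being pairwise
adjacent exactly when `inClique` holds. -/
def splitVertexGraph {V : Type*} (G : SimpleGraph V) (v : V) (inClique : Prop)
    (x : ℕ) : SimpleGraph (V ⊕ Fin x) where
  Adj p q :=
    match p, q with
    | Sum.inl a, Sum.inl b => G.Adj a b ∧ a ≠ v ∧ b ≠ v
    | Sum.inl a, Sum.inr _ => G.Adj a v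
    | Sum.inr _, Sum.inl b => G.Adj b v
    | Sum.inr i, Sum.inr j => i ≠ j ∧ inClique
  symm := by
    refine ⟨?_⟩
    rintro (a | a) (b | b) h
    · exact ⟨h.1.symm, h.2.2, h.2.1⟩
    · exact h
    · exact h
    · exact ⟨h.1.symm, h.2⟩
  loopless := by
    refine ⟨?_⟩
    rintro (a | a) h
    · exact G.irrefl h.1
    · exact h.1 rfl

/-- The terminal pairs obtained from `X` by replacing, in each occurrence of a terminal
pair containing `v`, the vertex `v` by a fresh copy (a distinct copy for each occurrence,
chosen via the equivalence `e`). -/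
def replacedPairs {V : Type*} [DecidableEq V] {k x : ℕ} (X : Fin k → V × V) (v : V)
    (e : {i : Fin k // (X i).1 = v ∨ (X i).2 = v} ≃ Fin x) :
    Fin k → (V ⊕ Fin x) × (V ⊕ Fin x) := fun i =>
  if h1 : (X i).1 = v then (Sum.inr (e ⟨i, Or.inl h1⟩), Sum.inl (X i).2)
  else if h2 : (X i).2 = v then (Sum.inl (X i).1, Sum.inr (e ⟨i, Or.inr h2⟩))
  else (Sum.inl (X i).1, Sum.inl (X i).2)

/-!
Both directions compare the two instances along `collapse : V ⊕ Fin x → V`, which sends every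
copy back to `v`.

A solution of `(G, X)` maps into the new graph path by path, through the graph homomorphism
sending `v` to the copy belonging to the occurrence at hand; `collapse` undoes each of these
maps, so paths, distinctness and internal disjointness all pull back from the old solution.

Conversely, in a solution of the new instance every copy is an endpoint of its own path, hence
internal to no path, so each path meets at most one copy and collapses to a path of `G`; its
internal vertices are old vertices other than `v`, so disjointness survives. Two collapsed paths
can coincide only if both are the single edge of a repeated terminal pair, and on a split graph
the hypotheses on `X` exclude repeated adjacent pairs: a pair inside `C` occurs at most once, a
pair between `C` and `I` is not an edge, and `I` is independent.
-/

namespace SimpleGraph.Walk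

variable {V W : Type*} {G : SimpleGraph V} {a b u : V}

theorem exists_adj_of_mem_support (w : G.Walk a b) (hab : a ≠ b) (hu : u ∈ w.support) :
    ∃ z, G.Adj u z := by
  obtain ⟨s, hs, hus⟩ := (mem_support_iff_exists_mem_edges_of_not_nil (not_nil_of_ne hab)).mp hu
  obtain ⟨z, rfl⟩ := Sym2.mem_iff_exists.mp hus
  exact ⟨z, G.mem_edgeSet.mp (w.edges_subset_edgeSet hs)⟩

theorem mem_of_mem_support_tail_dropLast {w : G.Walk a b} (hu : u ∈ w.support.tail.dropLast) :
    u ∈ w.support :=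
  List.mem_of_mem_tail (List.mem_of_mem_dropLast hu)

theorem IsPath.mem_support_tail_dropLast_iff_s19 {w : G.Walk a b} (hw : w.IsPath) :
    u ∈ w.support.tail.dropLast ↔ u ∈ w.support ∧ u ≠ a ∧ u ≠ b := by
  cases w with
  | nil => simp
  | cons h p =>
    have ha : a ∉ p.support := (List.nodup_cons.mp (support_cons h p ▸ hw.support_nodup)).1
    have hconcat := p.dropLast_support_concat
    have hb : b ∉ p.support.dropLast := by
      have hnd : (p.support.dropLast ++ [b]).Nodup := by
        rw [hconcat]; exact hw.of_cons.support_nodup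
      exact fun hb => List.disjoint_of_nodup_append hnd hb (List.mem_singleton_self b)
    rw [support_cons, List.tail_cons, List.mem_cons]
    grind

theorem support_eq_pair_of_support_tail_dropLast_eq_nil {w : G.Walk a b} (hab : a ≠ b)
    (hw : w.support.tail.dropLast = []) : w.support = [a, b] := by
  have hb := w.end_mem_tail_support_of_ne hab
  have hlen : w.support.tail.length = 1 := by
    have hlen := congrArg List.length hw
    rw [List.length_dropLast, List.length_nil] at hlen
    have := List.length_pos_of_mem hb
    omega
  obtain ⟨y, hy⟩ := List.length_eq_one_iff.mp hlen
  rw [hy, List.mem_singleton] at hb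
  rw [← w.cons_tail_support, hy, hb]

theorem adj_of_support_eq_pair {w : G.Walk a b} (hw : w.support = [a, b]) : G.Adj a b :=
  adj_of_length_eq_one (by simpa [hw] using w.length_support)

theorem exists_support_eq_map {H : SimpleGraph W} (φ : V → W) :
    ∀ {a b : V} (w : G.Walk a b), (∀ d ∈ w.darts, H.Adj (φ d.fst) (φ d.snd)) →
      ∃ w' : H.Walk (φ a) (φ b), w'.support = w.support.map φ
  | _, _, nil, _ => ⟨nil, rfl⟩
  | _, _, cons h w, hφ => by
    obtain ⟨w', hw'⟩ := exists_support_eq_map φ w fun d hd => hφ d (by simp [hd])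
    exact ⟨cons (hφ ⟨(_, _), h⟩ List.mem_cons_self) w', by simp [hw']⟩

end SimpleGraph.Walk

theorem PairwiseInternallyDisjoint.support_eq_pair {V ι : Type*} {G : SimpleGraph V}
    {X : ι → V × V} {P : WalkFamily G X} (hP : PairwiseInternallyDisjoint G X P) {i j : ι}
    (hij : i ≠ j) (hX : (X i).1 ≠ (X i).2) (hPij : (P i).support = (P j).support) :
    (P i).support = [(X i).1, (X i).2] :=
  Walk.support_eq_pair_of_support_tail_dropLast_eq_nil hX <| List.eq_nil_iff_forall_not_mem.mpr
    fun _ hu => hP i j hij _ hu (hPij ▸ Walk.mem_of_mem_support_tail_dropLast hu)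

theorem IsSplitPartition.not_adj_of_repeated_pair {V : Type*} [DecidableEq V] {G : SimpleGraph V}
    {C I : Finset V} (hsplit : IsSplitPartition G C I) {k : ℕ} {X : Fin k → V × V}
    (hTypeI : ∀ i : Fin k,
      (((X i).1 ∈ C ∧ (X i).2 ∈ I) ∨ ((X i).1 ∈ I ∧ (X i).2 ∈ C)) →
        ¬ G.Adj (X i).1 (X i).2)
    (hTypeII : ∀ s t : V, s ∈ C → t ∈ C →
      (Finset.univ.filter (fun i : Fin k => X i = (s, t) ∨ X i = (t, s))).card ≤ 1)
    {i j : Fin k} (hij : i ≠ j) (hXij : X i = X j) : ¬ G.Adj (X i).1 (X i).2 := by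
  obtain ⟨hcover, -, -, hindep⟩ := hsplit
  rcases hcover (X i).1 with hs | hs <;> rcases hcover (X i).2 with ht | ht
  · refine absurd (hTypeII _ _ hs ht) (Finset.one_lt_card.mpr ⟨i, ?_, j, ?_, hij⟩).not_ge <;>
      simp [← hXij]
  · exact hTypeI i (.inl ⟨hs, ht⟩)
  · exact hTypeI i (.inr ⟨hs, ht⟩)
  · exact hindep _ hs _ ht

namespace splitVertexGraph

variable {V : Type*} {G : SimpleGraph V} {v : V} {ic : Prop} {x : ℕ}

def collapse (v : V) : V ⊕ Fin x → V := Sum.elim id fun _ => v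

@[simp] theorem collapse_inl (u : V) : collapse v (.inl u : V ⊕ Fin x) = u := rfl

@[simp] theorem collapse_inr (c : Fin x) : collapse v (.inr c : V ⊕ Fin x) = v := rfl

theorem eq_inl_of_collapse_eq {z : V ⊕ Fin x} {u : V} (hz : collapse v z = u) (hu : u ≠ v) :
    z = .inl u := by
  cases z <;> simp_all

theorem adj_collapse {p q : V ⊕ Fin x} (h : (splitVertexGraph G v ic x).Adj p q)
    (hpq : collapse v p ≠ collapse v q) : G.Adj (collapse v p) (collapse v q) := by
  rcases p with a | c <;> rcases q with b | c'
  · exact h.1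
  · exact h
  · exact (show G.Adj b v from h).symm
  · exact absurd rfl hpq

theorem not_adj_inl_self (z : V ⊕ Fin x) : ¬ (splitVertexGraph G v ic x).Adj (.inl v) z := by
  rcases z with b | c
  · exact fun h => h.2.1 rfl
  · exact G.irrefl

theorem inl_not_mem_support {p q : V ⊕ Fin x} (w : (splitVertexGraph G v ic x).Walk p q)
    (hpq : p ≠ q) : .inl v ∉ w.support := fun hv =>
  let ⟨z, hz⟩ := w.exists_adj_of_mem_support hpq hv
  not_adj_inl_self z hz

variable [DecidableEq V]

def lift (v : V) (c : Fin x) (u : V) : V ⊕ Fin x := if u = v then .inr c else .inl u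

@[simp] theorem collapse_lift (c : Fin x) (u : V) : collapse v (lift v c u) = u := by
  unfold lift; split_ifs with h <;> simp [h]

theorem collapse_comp_lift (c : Fin x) : collapse v ∘ lift v c = id :=
  funext (collapse_lift c)

variable (G v ic) in
def liftHom (c : Fin x) : G →g splitVertexGraph G v ic x where
  toFun := lift v c
  map_rel' {a b} h := by
    unfold lift
    split_ifs with ha hb hb
    · exact absurd (ha.trans hb.symm) h.ne
    · subst ha; exact h.symm
    · subst hb; exact h
    · exact ⟨h, ha, hb⟩

theorem liftHom_injective (c : Fin x) : Function.Injective (liftHom G v ic c) :=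
  Function.LeftInverse.injective (collapse_lift c)

end splitVertexGraph

section replacedPairs

open splitVertexGraph

variable {V : Type*} [DecidableEq V] {k x : ℕ} {X : Fin k → V × V} {v : V}
  {e : {i : Fin k // (X i).1 = v ∨ (X i).2 = v} ≃ Fin x}

@[simp] theorem collapse_replacedPairs_fst (i : Fin k) :
    collapse v (replacedPairs X v e i).1 = (X i).1 := by
  unfold replacedPairs; split_ifs with h1 <;> simp [h1]

@[simp] theorem collapse_replacedPairs_snd (i : Fin k) :
    collapse v (replacedPairs X v e i).2 = (X i).2 := by
  unfold replacedPairs; split_ifs <;> simp_all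

theorem replacedPairs_fst_ne_snd {i : Fin k} (hX : (X i).1 ≠ (X i).2) :
    (replacedPairs X v e i).1 ≠ (replacedPairs X v e i).2 := fun h =>
  hX (by rw [← collapse_replacedPairs_fst, h, collapse_replacedPairs_snd])

theorem replacedPairs_eq_lift {i : Fin k} (hX : (X i).1 ≠ (X i).2) {c : Fin x}
    (hc : ∀ h, e ⟨i, h⟩ = c) : Prod.map (lift v c) (lift v c) (X i) = replacedPairs X v e i := by
  by_cases h1 : (X i).1 = v
  · have h2 : (X i).2 ≠ v := fun h2 => hX (h1.trans h2.symm)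
    simp [Prod.ext_iff, replacedPairs, lift, h1, h2, hc]
  · by_cases h2 : (X i).2 = v <;> simp [Prod.ext_iff, replacedPairs, lift, h1, h2, hc]

theorem inr_mem_replacedPairs (m : {i : Fin k // (X i).1 = v ∨ (X i).2 = v}) :
    (replacedPairs X v e m.1).1 = .inr (e m) ∨ (replacedPairs X v e m.1).2 = .inr (e m) := by
  obtain ⟨i, hi⟩ := m
  unfold replacedPairs
  split_ifs with h1 h2
  · simp
  · simp
  · exact (hi.elim h1 h2).elim

theorem eq_of_inr_mem_replacedPairs {i : Fin k} {c : Fin x}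
    (h : (replacedPairs X v e i).1 = .inr c ∨ (replacedPairs X v e i).2 = .inr c) :
    (e.symm c).1 = i := by
  unfold replacedPairs at h
  split_ifs at h with h1 h2 <;> simp at h <;> simp [← h]

end replacedPairs

open splitVertexGraph in
theorem VDPYes.to_splitVertexGraph {V : Type*} [DecidableEq V] {G : SimpleGraph V} {k x : ℕ}
    {X : Fin k → V × V} (hX : ∀ i, (X i).1 ≠ (X i).2) {v : V} (ic : Prop) (hx : 0 < x)
    (e : {i : Fin k // (X i).1 = v ∨ (X i).2 = v} ≃ Fin x) (hYes : VDPYes G X) :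
    VDPYes (splitVertexGraph G v ic x) (replacedPairs X v e) := by
  obtain ⟨P, hpath, hsupp, hdisj⟩ := hYes
  have hcopy (i : Fin k) : ∃ c : Fin x, ∀ h, e ⟨i, h⟩ = c :=
    if h : (X i).1 = v ∨ (X i).2 = v then ⟨e ⟨i, h⟩, fun _ => rfl⟩
    else ⟨⟨0, hx⟩, fun h' => absurd h' h⟩
  choose c hc using hcopy
  let Q : WalkFamily (splitVertexGraph G v ic x) (replacedPairs X v e) := fun i =>
    ((P i).map (liftHom G v ic (c i))).copy
      (congrArg Prod.fst (replacedPairs_eq_lift (hX i) (hc i)))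
      (congrArg Prod.snd (replacedPairs_eq_lift (hX i) (hc i)))
  have hcollapse (i : Fin k) : (Q i).support.map (collapse v) = (P i).support := by
    simp [Q, liftHom, collapse_comp_lift]
  refine ⟨Q, fun i => ?_, fun i j hij hQij => ?_, fun i j hij z hz hzj => ?_⟩
  · exact (Walk.isPath_copy _ _ _).mpr ((hpath i).map (liftHom_injective _))
  · exact hsupp i j hij (by rw [← hcollapse i, ← hcollapse j, hQij])
  · refine hdisj i j hij (collapse v z) ?_ (hcollapse j ▸ List.mem_map_of_mem hzj)
    rw [← hcollapse i, ← List.map_tail, ← List.map_dropLast]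
    exact List.mem_map_of_mem hz

namespace IsVDPSolution

open splitVertexGraph

variable {V : Type*} [DecidableEq V] {G : SimpleGraph V} {ic : Prop} {k x : ℕ}
  {X : Fin k → V × V} {v : V} {e : {i : Fin k // (X i).1 = v ∨ (X i).2 = v} ≃ Fin x}
  {Q : WalkFamily (splitVertexGraph G v ic x) (replacedPairs X v e)}

theorem inr_mem_replacedPairs_of_mem_support
    (hQ : IsVDPSolution (splitVertexGraph G v ic x) (replacedPairs X v e) Q) {i : Fin k}
    {c : Fin x} (hc : .inr c ∈ (Q i).support) :
    (replacedPairs X v e i).1 = .inr c ∨ (replacedPairs X v e i).2 = .inr c := by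
  by_contra hend
  obtain ⟨hfst, hsnd⟩ := not_or.mp hend
  have hm := inr_mem_replacedPairs (e := e) (e.symm c)
  rw [e.apply_symm_apply] at hm
  have hmi : i ≠ (e.symm c).1 := by rintro rfl; exact hend hm
  have hint := (hQ.1 i).mem_support_tail_dropLast_iff_s19.mpr
    ⟨hc, fun h => hfst h.symm, fun h => hsnd h.symm⟩
  refine hQ.2.2 i _ hmi _ hint ?_
  rcases hm with hm | hm
  · exact hm ▸ (Q _).start_mem_support
  · exact hm ▸ (Q _).end_mem_support

theorem collapse_injOn (hX : ∀ i, (X i).1 ≠ (X i).2)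
    (hQ : IsVDPSolution (splitVertexGraph G v ic x) (replacedPairs X v e) Q) (i : Fin k) :
    Set.InjOn (collapse v) {z | z ∈ (Q i).support} := by
  have hv := inl_not_mem_support (Q i) (replacedPairs_fst_ne_snd (hX i))
  rintro (a | c) ha (b | c') hb h
  · simpa using h
  · exact absurd ((show a = v from h) ▸ ha) hv
  · exact absurd ((show b = v from h.symm) ▸ hb) hv
  · have hcc' := (eq_of_inr_mem_replacedPairs (hQ.inr_mem_replacedPairs_of_mem_support ha)).trans
      (eq_of_inr_mem_replacedPairs (hQ.inr_mem_replacedPairs_of_mem_support hb)).symm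
    rw [e.symm.injective (Subtype.ext hcc')]

theorem exists_eq_inl_of_mem_support_tail_dropLast (hX : ∀ i, (X i).1 ≠ (X i).2)
    (hQ : IsVDPSolution (splitVertexGraph G v ic x) (replacedPairs X v e) Q) {i : Fin k}
    {z : V ⊕ Fin x} (hz : z ∈ (Q i).support.tail.dropLast) : ∃ u ≠ v, z = .inl u := by
  obtain ⟨hzQ, hfst, hsnd⟩ := (hQ.1 i).mem_support_tail_dropLast_iff_s19.mp hz
  rcases z with u | c
  · exact ⟨u, fun h => inl_not_mem_support (Q i) (replacedPairs_fst_ne_snd (hX i)) (h ▸ hzQ), rfl⟩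
  · rcases hQ.inr_mem_replacedPairs_of_mem_support hzQ with h | h
    · exact absurd h.symm hfst
    · exact absurd h.symm hsnd

end IsVDPSolution

open splitVertexGraph in
theorem VDPYes.of_splitVertexGraph {V : Type*} [DecidableEq V] {G : SimpleGraph V} {k x : ℕ}
    {X : Fin k → V × V} (hX : ∀ i, (X i).1 ≠ (X i).2)
    (hrepeat : ∀ i j, i ≠ j → X i = X j → ¬ G.Adj (X i).1 (X i).2) {v : V} {ic : Prop}
    {e : {i : Fin k // (X i).1 = v ∨ (X i).2 = v} ≃ Fin x}
    (hYes : VDPYes (splitVertexGraph G v ic x) (replacedPairs X v e)) : VDPYes G X := by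
  obtain ⟨Q, hQ⟩ := hYes
  have hadj (i : Fin k) : ∀ d ∈ (Q i).darts, G.Adj (collapse v d.fst) (collapse v d.snd) :=
    fun d hd => adj_collapse d.adj fun h => d.adj.ne <| hQ.collapse_injOn hX i
      ((Q i).dart_fst_mem_support_of_mem_darts hd) ((Q i).dart_snd_mem_support_of_mem_darts hd) h
  choose R hR using fun i => (Q i).exists_support_eq_map (collapse v) (hadj i)
  let P : WalkFamily G X := fun i =>
    (R i).copy (collapse_replacedPairs_fst i) (collapse_replacedPairs_snd i)
  have hP (i : Fin k) : (P i).support = (Q i).support.map (collapse v) := by simp [P, hR]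
  have hdisj : PairwiseInternallyDisjoint G X P := by
    intro i j hij u hu huj
    rw [hP, ← List.map_tail, ← List.map_dropLast] at hu
    obtain ⟨z, hz, rfl⟩ := List.mem_map.mp hu
    obtain ⟨a, hav, rfl⟩ := hQ.exists_eq_inl_of_mem_support_tail_dropLast hX hz
    obtain ⟨z', hz', hz'a⟩ := List.mem_map.mp (hP j ▸ huj)
    exact hQ.2.2 i j hij _ hz (eq_inl_of_collapse_eq hz'a hav ▸ hz')
  refine ⟨P, fun i => ?_, fun i j hij hPij => ?_, hdisj⟩
  · rw [Walk.isPath_def, hP]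
    exact (hQ.1 i).support_nodup.map_on fun a ha b hb => hQ.collapse_injOn hX i ha hb
  · have hi := hdisj.support_eq_pair hij (hX i) hPij
    have hj := hdisj.support_eq_pair hij.symm (hX j) hPij.symm
    have hXij : X i = X j := by
      have hpair := hi.symm.trans (hPij.trans hj)
      simp only [List.cons.injEq, and_true] at hpair
      exact Prod.ext hpair.1 hpair.2
    exact hrepeat i j hij hXij (Walk.adj_of_support_eq_pair hi)

theorem vdp_split_rr3_general {V : Type*} [DecidableEq V] (G : SimpleGraph V)
    (C I : Finset V) (hsplit : IsSplitPartition G C I)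
    {k : ℕ} (X : Fin k → V × V) (hX : ∀ i, (X i).1 ≠ (X i).2)
    (hTypeI : ∀ i : Fin k,
      (((X i).1 ∈ C ∧ (X i).2 ∈ I) ∨ ((X i).1 ∈ I ∧ (X i).2 ∈ C)) →
        ¬ G.Adj (X i).1 (X i).2)
    (hTypeII : ∀ s t : V, s ∈ C → t ∈ C →
      (Finset.univ.filter (fun i : Fin k => X i = (s, t) ∨ X i = (t, s))).card ≤ 1)
    (v : V) {x : ℕ} (hx : 2 ≤ x)
    (e : {i : Fin k // (X i).1 = v ∨ (X i).2 = v} ≃ Fin x) :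
    VDPYes G X ↔ VDPYes (splitVertexGraph G v (v ∈ C) x) (replacedPairs X v e) :=
  ⟨VDPYes.to_splitVertexGraph hX _ (by omega) e,
    VDPYes.of_splitVertexGraph hX fun _ _ hij hXij =>
      hsplit.not_adj_of_repeated_pair hTypeI hTypeII hij hXij⟩

/-- Safeness of reduction rule RR3 on split graphs: if a vertex `v` appears
in `x ≥ 2` occurrences of terminal pairs, replacing `v` with `x` fresh copies (each
adjacent to all neighbors of `v`, pairwise adjacent iff `v` is on the clique side, with
`v` itself deleted) and distributing the occurrences among the copies preserves the answer
of VDP. -/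
theorem vdp_split_rr3 {V : Type*} [DecidableEq V] (G : SimpleGraph V)
    (C I : Finset V) (hsplit : IsSplitPartition G C I)
    {k : ℕ} (X : Fin k → V × V) (hX : ∀ i, (X i).1 ≠ (X i).2)
    (hIterm : ∀ y ∈ I, IsTerminal X y)
    (hTypeI : ∀ i : Fin k,
      (((X i).1 ∈ C ∧ (X i).2 ∈ I) ∨ ((X i).1 ∈ I ∧ (X i).2 ∈ C)) →
        ¬ G.Adj (X i).1 (X i).2)
    (hTypeII : ∀ s t : V, s ∈ C → t ∈ C →
      (Finset.univ.filter (fun i : Fin k => X i = (s, t) ∨ X i = (t, s))).card ≤ 1)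
    (v : V) {x : ℕ} (hx : 2 ≤ x)
    (e : {i : Fin k // (X i).1 = v ∨ (X i).2 = v} ≃ Fin x) :
    VDPYes G X ↔ VDPYes (splitVertexGraph G v (v ∈ C) x) (replacedPairs X v e) :=
  vdp_split_rr3_general G C I hsplit X hX hTypeI hTypeII v hx e
end
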